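/- arXiv:2011.04358 — 9 statements merged into one kernel-verified Lean document; each statement's English description precedes it below -/
import Mathlib

section
/- Let n ≥ 2 and let f be the symmetric quartic form on ℝⁿ determined by real coefficients a, b, c, d, e. Let Z^f be the set of pairs (r,s) of positive integers consisting of (k,1) and (1,k) for all k ∈ {1,…,n−1}, together with the pairs (k,n−k) for all k ∈ {1,…,n−1} in case a > 0 and b < 0. Then f(x) ≥ 0 for every x ∈ ℝⁿ with all coordinates nonnegative if and only if both: (i) f(1_k, 0_{n−k}) ≥ 0 for every k ∈ {1,…,n}; and (ii) for every (r,s) ∈ Z^f such that the quadratic polynomial f^∂_{r,s}(t) = 4a(t²+t+1) + 3b(t+1)(rt+s) + 4c(rt²+s) + 2d(rt+s)² is nonconstant in t, and for every real t > 1 with f^∂_{r,s}(t) = 0, one has f_{r,s}(t) ≥ 0. -/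
open Finset

/-- The `k`-th power sum of `x ∈ ℝⁿ`. -/
noncomputable def powSum (n : ℕ) (k : ℕ) (x : Fin n → ℝ) : ℝ := ∑ i, x i ^ k

/-- The symmetric quartic form with coefficients `a, b, c, d, e`. -/
noncomputable def quarticF (n : ℕ) (a b c d e : ℝ) (x : Fin n → ℝ) : ℝ :=
  a * powSum n 4 x + b * powSum n 3 x * powSum n 1 x + c * (powSum n 2 x) ^ 2
    + d * powSum n 2 x * (powSum n 1 x) ^ 2 + e * (powSum n 1 x) ^ 4

/-- The point `(u·1_r, v·1_s, 0_{n−r−s}) ∈ ℝⁿ`. -/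
noncomputable def blockPt (n r s : ℕ) (u v : ℝ) : Fin n → ℝ :=
  fun i => if (i : ℕ) < r then u else if (i : ℕ) < r + s then v else 0

/-- The quadratic `f^∂_{r,s}`. -/
noncomputable def fdrs (a b c d : ℝ) (r s : ℕ) (t : ℝ) : ℝ :=
  4 * a * (t ^ 2 + t + 1) + 3 * b * (t + 1) * ((r : ℝ) * t + (s : ℝ))
    + 4 * c * ((r : ℝ) * t ^ 2 + (s : ℝ)) + 2 * d * ((r : ℝ) * t + (s : ℝ)) ^ 2

/-- The set `Z^f` of index pairs: `(k,1)` and `(1,k)` for `1 ≤ k ≤ n−1`, together with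
`(k, n−k)` for `1 ≤ k ≤ n−1` in case `a > 0 > b`. -/
def Zf (n : ℕ) (a b : ℝ) : Set (ℕ × ℕ) :=
  {p | ∃ k : ℕ, 1 ≤ k ∧ k ≤ n - 1 ∧ (p = (k, 1) ∨ p = (1, k))} ∪
  {p | a > 0 ∧ b < 0 ∧ ∃ k : ℕ, 1 ≤ k ∧ k ≤ n - 1 ∧ p = (k, n - k)}


open Filter

/-- update three coordinates -/
noncomputable def upd3 {n : ℕ} (x : Fin n → ℝ) (i j k : Fin n) (z1 z2 z3 : ℝ) : Fin n → ℝ :=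
  Function.update (Function.update (Function.update x i z1) j z2) k z3

lemma upd3_apply_i {n : ℕ} (x : Fin n → ℝ) {i j k : Fin n} (hij : i ≠ j) (hik : i ≠ k)
    (z1 z2 z3 : ℝ) : upd3 x i j k z1 z2 z3 i = z1 := by
  simp [upd3, Function.update_of_ne hik, Function.update_of_ne hij]

lemma upd3_apply_j {n : ℕ} (x : Fin n → ℝ) {i j k : Fin n} (hjk : j ≠ k)
    (z1 z2 z3 : ℝ) : upd3 x i j k z1 z2 z3 j = z2 := by
  simp [upd3, Function.update_of_ne hjk]

lemma upd3_apply_k {n : ℕ} (x : Fin n → ℝ) (i j k : Fin n)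
    (z1 z2 z3 : ℝ) : upd3 x i j k z1 z2 z3 k = z3 := by
  simp [upd3]

lemma upd3_apply_other {n : ℕ} (x : Fin n → ℝ) {i j k l : Fin n} (hli : l ≠ i) (hlj : l ≠ j)
    (hlk : l ≠ k) (z1 z2 z3 : ℝ) : upd3 x i j k z1 z2 z3 l = x l := by
  simp [upd3, Function.update_of_ne hlk, Function.update_of_ne hlj, Function.update_of_ne hli]

lemma sum_upd3 {n : ℕ} (x : Fin n → ℝ) {i j k : Fin n} (hij : i ≠ j) (hik : i ≠ k)
    (hjk : j ≠ k) (z1 z2 z3 : ℝ) (g : ℝ → ℝ) :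
    ∑ l, g (upd3 x i j k z1 z2 z3 l)
      = (∑ l, g (x l)) - g (x i) - g (x j) - g (x k) + g z1 + g z2 + g z3 := by
  classical
  have hsub : ({i, j, k} : Finset (Fin n)) ⊆ univ := subset_univ _
  have hsum1 : ∀ y : Fin n → ℝ,
      ∑ l, g (y l) = (∑ l ∈ univ \ {i, j, k}, g (y l)) + (g (y i) + g (y j) + g (y k)) := by
    intro y
    rw [← Finset.sum_sdiff hsub]
    congr 1
    rw [Finset.sum_insert (by simp [hij, hik]), Finset.sum_insert (by simp [hjk]),
      Finset.sum_singleton]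
    ring
  have h1 := hsum1 (upd3 x i j k z1 z2 z3)
  have h2 := hsum1 x
  have heq : ∀ l ∈ univ \ ({i, j, k} : Finset (Fin n)),
      g (upd3 x i j k z1 z2 z3 l) = g (x l) := by
    intro l hl
    simp only [Finset.mem_sdiff, Finset.mem_insert, Finset.mem_singleton] at hl
    push_neg at hl
    rw [upd3_apply_other x hl.2.1 hl.2.2.1 hl.2.2.2]
  rw [Finset.sum_congr rfl heq] at h1
  rw [upd3_apply_i x hij hik, upd3_apply_j x hjk, upd3_apply_k x] at h1
  rw [h1, h2]; ring

lemma powSum_upd3 {n : ℕ} (x : Fin n → ℝ) {i j k : Fin n} (hij : i ≠ j) (hik : i ≠ k)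
    (hjk : j ≠ k) (z1 z2 z3 : ℝ) (m : ℕ) :
    powSum n m (upd3 x i j k z1 z2 z3)
      = powSum n m x - x i ^ m - x j ^ m - x k ^ m + z1 ^ m + z2 ^ m + z3 ^ m :=
  sum_upd3 x hij hik hjk z1 z2 z3 (· ^ m)

lemma powSum_blockPt {n : ℕ} (r s : ℕ) (hrs : r + s ≤ n) (u v : ℝ) {m : ℕ} (hm : 1 ≤ m) :
    powSum n m (blockPt n r s u v) = r * u ^ m + s * v ^ m := by
  classical
  unfold powSum blockPt
  rw [Fin.sum_univ_eq_sum_range (fun l => (if l < r then u else if l < r + s then v else 0) ^ m)]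
  rw [Finset.range_eq_Ico, ← Finset.sum_Ico_consecutive _ (Nat.zero_le r) (le_trans (Nat.le_add_right r s) hrs),
    ← Finset.sum_Ico_consecutive _ (Nat.le_add_right r s) hrs]
  have e1 : ∑ l ∈ Finset.Ico 0 r, (if l < r then u else if l < r + s then v else 0) ^ m
      = r * u ^ m := by
    rw [Finset.sum_congr rfl (fun l hl => by
      simp only [Finset.mem_Ico] at hl
      rw [if_pos hl.2])]
    simp [mul_comm]
  have e2 : ∑ l ∈ Finset.Ico r (r + s), (if l < r then u else if l < r + s then v else 0) ^ m
      = s * v ^ m := by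
    rw [Finset.sum_congr rfl (fun l hl => by
      simp only [Finset.mem_Ico] at hl
      rw [if_neg (by omega), if_pos hl.2])]
    simp [mul_comm]
  have e3 : ∑ l ∈ Finset.Ico (r + s) n, (if l < r then u else if l < r + s then v else 0) ^ m
      = 0 := by
    apply Finset.sum_eq_zero
    intro l hl
    simp only [Finset.mem_Ico] at hl
    rw [if_neg (by omega), if_neg (by omega)]
    exact zero_pow (by omega)
  rw [e1, e2, e3]; ring

section
variable {z1 z2 z3 u v w : ℝ}

/-- cubic Newton identity along the circle -/
lemma cube_diff (h1 : z1 + z2 + z3 = u + v + w) (h2 : z1^2 + z2^2 + z3^2 = u^2 + v^2 + w^2) :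
    z1^3 + z2^3 + z3^3 = u^3 + v^3 + w^3 + 3 * (z1*z2*z3 - u*v*w) := by
  linear_combination ((3*(z1^2+z2^2+z3^2) - ((z1+z2+z3)^2 + (z1+z2+z3)*(u+v+w) + (u+v+w)^2))/2) * h1
    + (3*(u+v+w)/2) * h2

lemma quart_diff (h1 : z1 + z2 + z3 = u + v + w) (h2 : z1^2 + z2^2 + z3^2 = u^2 + v^2 + w^2) :
    z1^4 + z2^4 + z3^4 = u^4 + v^4 + w^4 + 4 * (u+v+w) * (z1*z2*z3 - u*v*w) := by
  linear_combination (4*(z1*z2*z3) - ((z1+z2+z3)^3 + (z1+z2+z3)^2*(u+v+w) + (z1+z2+z3)*(u+v+w)^2 + (u+v+w)^3)/2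
      + (z1^2+z2^2+z3^2)*((z1+z2+z3)+(u+v+w))) * h1
    + ((u+v+w)^2 + ((z1^2+z2^2+z3^2)+(u^2+v^2+w^2))/2) * h2
end

/-- a quartic polynomial with a local min at 0 has vanishing linear coefficient -/
lemma quartic_local_min (c1 c2 c3 c4 ε : ℝ) (hε : 0 < ε)
    (h : ∀ δ : ℝ, |δ| < ε → 0 ≤ c1*δ + c2*δ^2 + c3*δ^3 + c4*δ^4) : c1 = 0 := by
  by_contra hc
  have hM : (0:ℝ) < |c2| + |c3| + |c4| + 1 := by positivity
  set M := |c2| + |c3| + |c4| + 1 with hMdef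
  have hc1 : 0 < |c1| := abs_pos.mpr hc
  set δ0 : ℝ := min (ε/2) (min 1 (|c1| / (2*M))) with hδ0def
  have hδ0pos : 0 < δ0 := by
    apply lt_min (by linarith)
    apply lt_min one_pos
    positivity
  have hδ0ε : δ0 < ε := lt_of_le_of_lt (min_le_left _ _) (by linarith)
  have hδ01 : δ0 ≤ 1 := le_trans (min_le_right _ _) (min_le_left _ _)
  have hδ0c : δ0 ≤ |c1| / (2*M) := le_trans (min_le_right _ _) (min_le_right _ _)
  set δ : ℝ := if 0 < c1 then -δ0 else δ0 with hδdef
  have habs : |δ| = δ0 := by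
    rcases le_or_gt c1 0 with h' | h'
    · rw [hδdef, if_neg (not_lt.mpr h'), abs_of_pos hδ0pos]
    · rw [hδdef, if_pos h', abs_neg, abs_of_pos hδ0pos]
  have hlt : |δ| < ε := by rw [habs]; exact hδ0ε
  have hkey := h δ hlt
  have hc1δ : c1 * δ = -(|c1| * δ0) := by
    rcases le_or_gt c1 0 with h' | h'
    · rw [hδdef, if_neg (not_lt.mpr h'), abs_of_nonpos (le_of_lt (lt_of_le_of_ne h' hc))]; ring
    · rw [hδdef, if_pos h', abs_of_pos h']; ring
  have hbound : c2*δ^2 + c3*δ^3 + c4*δ^4 ≤ M * δ0^2 := by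
    have h2 : c2*δ^2 ≤ |c2| * δ0^2 := by
      have : c2*δ^2 ≤ |c2 * δ^2| := le_abs_self _
      rw [abs_mul, abs_pow, habs] at this; linarith [this]
    have h3 : c3*δ^3 ≤ |c3| * δ0^3 := by
      have : c3*δ^3 ≤ |c3 * δ^3| := le_abs_self _
      rw [abs_mul, abs_pow, habs] at this; linarith [this]
    have h4 : c4*δ^4 ≤ |c4| * δ0^4 := by
      have : c4*δ^4 ≤ |c4 * δ^4| := le_abs_self _
      rw [abs_mul, abs_pow, habs] at this; linarith [this]
    have e3 : δ0^3 ≤ δ0^2 := by nlinarith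
    have e4 : δ0^4 ≤ δ0^2 := by nlinarith
    have b3 : |c3| * δ0^3 ≤ |c3| * δ0^2 := by
      apply mul_le_mul_of_nonneg_left e3 (abs_nonneg _)
    have b4 : |c4| * δ0^4 ≤ |c4| * δ0^2 := by
      apply mul_le_mul_of_nonneg_left e4 (abs_nonneg _)
    have : δ0 ^ 2 ≥ 0 := sq_nonneg _
    nlinarith [this]
  have hMδ : M * δ0^2 ≤ |c1| * δ0 / 2 := by
    have : M * δ0 ≤ |c1| / 2 := by
      have := mul_le_mul_of_nonneg_left hδ0c (le_of_lt hM)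
      calc M * δ0 ≤ M * (|c1| / (2*M)) := by
            exact mul_le_mul_of_nonneg_left hδ0c (le_of_lt hM)
        _ = |c1| / 2 := by field_simp
    calc M * δ0^2 = (M * δ0) * δ0 := by ring
      _ ≤ (|c1| / 2) * δ0 := mul_le_mul_of_nonneg_right this (le_of_lt hδ0pos)
      _ = |c1| * δ0 / 2 := by ring
  nlinarith [hkey, hc1δ, hbound, hMδ, mul_pos hc1 hδ0pos]

/-- The circle move identity: replacing three coordinates keeping local `e1` and `q`
changes `f` linearly in the product. -/
lemma quarticF_upd3 {n : ℕ} (a b c d e : ℝ) (x : Fin n → ℝ) {i j k : Fin n}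
    (hij : i ≠ j) (hik : i ≠ k) (hjk : j ≠ k) {z1 z2 z3 : ℝ}
    (h1 : z1 + z2 + z3 = x i + x j + x k)
    (h2 : z1^2 + z2^2 + z3^2 = (x i)^2 + (x j)^2 + (x k)^2) :
    quarticF n a b c d e (upd3 x i j k z1 z2 z3)
      = quarticF n a b c d e x
        + (4*a*(x i + x j + x k) + 3*b*(powSum n 1 x)) * (z1*z2*z3 - x i * x j * x k) := by
  have e1 := powSum_upd3 x hij hik hjk z1 z2 z3 1
  have e2 := powSum_upd3 x hij hik hjk z1 z2 z3 2
  have e3 := powSum_upd3 x hij hik hjk z1 z2 z3 3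
  have e4 := powSum_upd3 x hij hik hjk z1 z2 z3 4
  have hc := cube_diff h1 h2
  have hq := quart_diff h1 h2
  simp only [pow_one] at e1
  have e1' : powSum n 1 (upd3 x i j k z1 z2 z3) = powSum n 1 x := by
    rw [e1]; linear_combination h1
  have e2' : powSum n 2 (upd3 x i j k z1 z2 z3) = powSum n 2 x := by
    rw [e2]; linear_combination h2
  unfold quarticF
  rw [e1', e2', e3, e4]
  linear_combination a * hq + b * (powSum n 1 x) * hc

lemma powSum3_upd3 {n : ℕ} (x : Fin n → ℝ) {i j k : Fin n}
    (hij : i ≠ j) (hik : i ≠ k) (hjk : j ≠ k) {z1 z2 z3 : ℝ}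
    (h1 : z1 + z2 + z3 = x i + x j + x k)
    (h2 : z1^2 + z2^2 + z3^2 = (x i)^2 + (x j)^2 + (x k)^2) :
    powSum n 3 (upd3 x i j k z1 z2 z3)
      = powSum n 3 x + 3 * (z1*z2*z3 - x i * x j * x k) := by
  have e3 := powSum_upd3 x hij hik hjk z1 z2 z3 3
  have hc := cube_diff h1 h2
  rw [e3]; linear_combination hc

lemma ev_pos_delta : ∀ᶠ δ in nhdsWithin (0:ℝ) (Set.Ioi 0), 0 < δ :=
  Filter.eventually_of_mem self_mem_nhdsWithin (fun _ h => h)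

lemma ev_lt_delta {c : ℝ} (hc : 0 < c) : ∀ᶠ δ in nhdsWithin (0:ℝ) (Set.Ioi 0), δ < c := by
  have : Set.Ioo (0:ℝ) c ∈ nhdsWithin (0:ℝ) (Set.Ioi 0) :=
    Ioo_mem_nhdsGT_of_mem ⟨le_refl 0, hc⟩
  exact Filter.eventually_of_mem this (fun δ h => h.2)

lemma ev_cubic_pos (A1 A2 A3 : ℝ) (h : 0 < A1) :
    ∀ᶠ δ in nhdsWithin (0:ℝ) (Set.Ioi 0), 0 < A1*δ + A2*δ^2 + A3*δ^3 := by
  have hc : 0 < min 1 (A1/(|A2|+|A3|+1)) := by positivity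
  filter_upwards [ev_pos_delta, ev_lt_delta hc] with δ h0 hlt
  have h1 : δ < 1 := lt_of_lt_of_le hlt (min_le_left _ _)
  have h2 : δ < A1/(|A2|+|A3|+1) := lt_of_lt_of_le hlt (min_le_right _ _)
  have hM : (0:ℝ) < |A2|+|A3|+1 := by positivity
  have h3 : δ * (|A2|+|A3|+1) < A1 := by
    rw [div_eq_inv_mul] at h2
    calc δ * (|A2|+|A3|+1) < (A1/(|A2|+|A3|+1)) * (|A2|+|A3|+1) := by
          apply mul_lt_mul_of_pos_right _ hM
          rw [div_eq_inv_mul]; exact h2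
      _ = A1 := by field_simp
  have e2 : -|A2| ≤ A2 := neg_abs_le A2
  have e3 : -|A3| ≤ A3 := neg_abs_le A3
  have k1 : A2*δ^2 ≥ (-|A2|) * δ^2 := mul_le_mul_of_nonneg_right e2 (sq_nonneg δ) 
  have hδ3 : (0:ℝ) ≤ δ^3 := by positivity
  have k2 : A3*δ^3 ≥ (-|A3|) * δ^3 := mul_le_mul_of_nonneg_right e3 hδ3
  have k3 : δ^3 ≤ δ^2 := by nlinarith
  have k2' : (-|A3|) * δ^3 ≥ (-|A3|) * δ^2 := by nlinarith [abs_nonneg A3]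
  have k4 : δ^2 * (|A2|+|A3|+1) < A1 * δ := by nlinarith
  nlinarith [abs_nonneg A2, abs_nonneg A3, sq_nonneg δ]

lemma ev_cont_pos (g : ℝ → ℝ) (hg : ContinuousAt g 0) (h : 0 < g 0) :
    ∀ᶠ δ in nhdsWithin (0:ℝ) (Set.Ioi 0), 0 < g δ := by
  have : ∀ᶠ δ in nhds (0:ℝ), 0 < g δ := hg.eventually_mem (Ioi_mem_nhds h)
  exact this.filter_mono nhdsWithin_le_nhds

/-- master circle-point construction: move the third coordinate along `δ ↦ T3 + σδ`,
solving for the other two on the circle. -/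
lemma circle_points (T1 T2 T3 σ : ℝ) (hT : T2 ≤ T1) (hT2pos : 0 < T2)
    (hD : ∀ᶠ δ in nhdsWithin (0:ℝ) (Set.Ioi 0),
      0 ≤ 2*((T1^2+T2^2+T3^2) - (T3+σ*δ)^2) - ((T1+T2+T3) - (T3+σ*δ))^2) :
    ∀ᶠ δ in nhdsWithin (0:ℝ) (Set.Ioi 0), ∃ z1 z2 : ℝ, 0 < z2 ∧ z2 ≤ z1 ∧
      z1 + z2 + (T3+σ*δ) = T1+T2+T3 ∧
      z1^2 + z2^2 + (T3+σ*δ)^2 = T1^2+T2^2+T3^2 ∧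
      z1*z2*(T3+σ*δ) = (T3+σ*δ) * (((T1+T2+T3) - (T3+σ*δ))^2
        - (T1^2+T2^2+T3^2) + (T3+σ*δ)^2)/2 := by
  set S : ℝ := T1+T2+T3 with hS
  set Q : ℝ := T1^2+T2^2+T3^2 with hQ
  set Df : ℝ → ℝ := fun δ => 2*(Q - (T3+σ*δ)^2) - (S - (T3+σ*δ))^2 with hDf
  set g2 : ℝ → ℝ := fun δ => ((S - (T3+σ*δ)) - Real.sqrt (Df δ))/2 with hg2
  have hcont : ContinuousAt g2 0 := by
    apply ContinuousAt.div_const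
    apply ContinuousAt.sub
    · fun_prop
    · exact (Real.continuous_sqrt.continuousAt).comp (by fun_prop)
  have hg20 : g2 0 = T2 := by
    have hD0 : Df 0 = (T1 - T2)^2 := by simp only [hDf, hQ, hS]; ring_nf
    simp only [hg2, hD0]
    rw [Real.sqrt_sq (by linarith)]
    simp only [hS]; ring_nf
  have hev2 : ∀ᶠ δ in nhdsWithin (0:ℝ) (Set.Ioi 0), 0 < g2 δ :=
    ev_cont_pos g2 hcont (by rw [hg20]; exact hT2pos)
  filter_upwards [hD, hev2] with δ hD0 hz2
  refine ⟨((S - (T3+σ*δ)) + Real.sqrt (Df δ))/2, g2 δ, hz2, ?_, ?_, ?_, ?_⟩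
  · simp only [hg2]
    have := Real.sqrt_nonneg (Df δ)
    linarith
  · simp only [hg2]; ring
  · have hsq : (Real.sqrt (Df δ))^2 = Df δ := Real.sq_sqrt hD0
    simp only [hg2]
    simp only [hDf] at hsq ⊢
    linear_combination hsq/2
  · have hsq : (Real.sqrt (Df δ))^2 = Df δ := Real.sq_sqrt hD0
    simp only [hg2]
    simp only [hDf] at hsq ⊢
    linear_combination (-(T3+σ*δ)/4) * hsq

/-- E1+: three distinct positive values, product can strictly increase on the circle. -/
lemma exists_up3 (u v w : ℝ) (hw : 0 < w) (hwv : w < v) (hvu : v < u) :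
    ∃ z1 z2 z3 : ℝ, 0 < z1 ∧ 0 < z2 ∧ 0 < z3 ∧ z1+z2+z3 = u+v+w ∧
      z1^2+z2^2+z3^2 = u^2+v^2+w^2 ∧ u*v*w < z1*z2*z3 := by
  have hD : ∀ᶠ δ in nhdsWithin (0:ℝ) (Set.Ioi 0),
      0 ≤ 2*((u^2+v^2+w^2) - (w+1*δ)^2) - ((u+v+w) - (w+1*δ))^2 := by
    have := ev_cont_pos (fun δ => 2*((u^2+v^2+w^2) - (w+1*δ)^2) - ((u+v+w) - (w+1*δ))^2)
      (by fun_prop) (by simp; nlinarith)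
    exact this.mono (fun δ h => le_of_lt h)
  have hM := circle_points u v w 1 (le_of_lt hvu) (by linarith) hD
  have hcub := ev_cubic_pos (w^2 - v*w - u*w + u*v) (2*w - v - u) 1 (by nlinarith)
  obtain ⟨δ, ⟨z1, z2, hz2, hz12, hsum, hsq, hprod⟩, hcubδ, hδ⟩ :=
    (hM.and (hcub.and ev_pos_delta)).exists
  refine ⟨z1, z2, w + 1*δ, by linarith, hz2, by linarith, hsum, hsq, ?_⟩
  rw [hprod]; nlinarith [hcubδ]

lemma exists_down3 (u v w : ℝ) (hw : 0 < w) (hwv : w < v) (hvu : v < u) :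
    ∃ z1 z2 z3 : ℝ, 0 < z1 ∧ 0 < z2 ∧ 0 < z3 ∧ z1+z2+z3 = u+v+w ∧
      z1^2+z2^2+z3^2 = u^2+v^2+w^2 ∧ z1*z2*z3 < u*v*w := by
  have hD : ∀ᶠ δ in nhdsWithin (0:ℝ) (Set.Ioi 0),
      0 ≤ 2*((u^2+v^2+w^2) - (w+(-1)*δ)^2) - ((u+v+w) - (w+(-1)*δ))^2 := by
    have := ev_cont_pos (fun δ => 2*((u^2+v^2+w^2) - (w+(-1)*δ)^2) - ((u+v+w) - (w+(-1)*δ))^2)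
      (by fun_prop) (by simp; nlinarith)
    exact this.mono (fun δ h => le_of_lt h)
  have hM := circle_points u v w (-1) (le_of_lt hvu) (by linarith) hD
  have hcub := ev_cubic_pos (w^2 - v*w - u*w + u*v) (-(2*w - v - u)) 1 (by nlinarith)
  obtain ⟨δ, ⟨z1, z2, hz2, hz12, hsum, hsq, hprod⟩, hcubδ, hδ, hδw⟩ :=
    (hM.and (hcub.and (ev_pos_delta.and (ev_lt_delta hw)))).exists
  refine ⟨z1, z2, w + (-1)*δ, by linarith, hz2, by linarith, hsum, hsq, ?_⟩
  rw [hprod]; nlinarith [hcubδ]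

/-- E2: split a doubled larger value `(u,u,v)`, `v<u`: product strictly increases. -/
lemma exists_up_uuv (u v : ℝ) (hv : 0 < v) (hvu : v < u) :
    ∃ z1 z2 z3 : ℝ, 0 < z1 ∧ 0 < z2 ∧ 0 < z3 ∧ z1+z2+z3 = u+u+v ∧
      z1^2+z2^2+z3^2 = u^2+u^2+v^2 ∧ u*u*v < z1*z2*z3 := by
  have hD : ∀ᶠ δ in nhdsWithin (0:ℝ) (Set.Ioi 0),
      0 ≤ 2*((u^2+u^2+v^2) - (v+1*δ)^2) - ((u+u+v) - (v+1*δ))^2 := by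
    filter_upwards [ev_pos_delta, ev_lt_delta (show (0:ℝ) < u - v by linarith)] with δ h0 h1
    nlinarith
  have hM := circle_points u u v 1 (le_refl u) (by linarith) hD
  have hcub := ev_cubic_pos ((u-v)^2) (2*v - 2*u) 1 (by nlinarith)
  obtain ⟨δ, ⟨z1, z2, hz2, hz12, hsum, hsq, hprod⟩, hcubδ, hδ⟩ :=
    (hM.and (hcub.and ev_pos_delta)).exists
  refine ⟨z1, z2, v + 1*δ, by linarith, hz2, by linarith, hsum, hsq, ?_⟩
  rw [hprod]; nlinarith [hcubδ]

/-- E3: split a doubled smaller value `(v,v,u)`, `v<u`: product strictly decreases. -/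
lemma exists_down_vvu (u v : ℝ) (hv : 0 < v) (hvu : v < u) :
    ∃ z1 z2 z3 : ℝ, 0 < z1 ∧ 0 < z2 ∧ 0 < z3 ∧ z1+z2+z3 = v+v+u ∧
      z1^2+z2^2+z3^2 = v^2+v^2+u^2 ∧ z1*z2*z3 < v*v*u := by
  have hD : ∀ᶠ δ in nhdsWithin (0:ℝ) (Set.Ioi 0),
      0 ≤ 2*((v^2+v^2+u^2) - (u+(-1)*δ)^2) - ((v+v+u) - (u+(-1)*δ))^2 := by
    filter_upwards [ev_pos_delta, ev_lt_delta (show (0:ℝ) < u - v by linarith)] with δ h0 h1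
    nlinarith
  have hM := circle_points v v u (-1) (le_refl v) hv hD
  have hcub := ev_cubic_pos ((u-v)^2) (-(2*u - 2*v)) 1 (by nlinarith)
  obtain ⟨δ, ⟨z1, z2, hz2, hz12, hsum, hsq, hprod⟩, hcubδ, hδ, hδu⟩ :=
    (hM.and (hcub.and (ev_pos_delta.and (ev_lt_delta (show (0:ℝ) < u by linarith))))).exists
  refine ⟨z1, z2, u + (-1)*δ, by linarith, hz2, by linarith, hsum, hsq, ?_⟩
  rw [hprod]; nlinarith [hcubδ]

/-- E4: from `(u,v,0)`, `0<v<u`: nearby circle points in the orthant with positive product. -/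
lemma exists_up_uv0 (u v : ℝ) (hv : 0 < v) (hvu : v < u) :
    ∃ z1 z2 z3 : ℝ, 0 < z1 ∧ 0 < z2 ∧ 0 < z3 ∧ z1+z2+z3 = u+v+0 ∧
      z1^2+z2^2+z3^2 = u^2+v^2+0^2 ∧ u*v*0 < z1*z2*z3 := by
  have hD : ∀ᶠ δ in nhdsWithin (0:ℝ) (Set.Ioi 0),
      0 ≤ 2*((u^2+v^2+0^2) - (0+1*δ)^2) - ((u+v+0) - (0+1*δ))^2 := by
    have := ev_cont_pos (fun δ => 2*((u^2+v^2+0^2) - (0+1*δ)^2) - ((u+v+0) - (0+1*δ))^2)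
      (by fun_prop) (by simp; nlinarith)
    exact this.mono (fun δ h => le_of_lt h)
  have hM := circle_points u v 0 1 (le_of_lt hvu) hv hD
  have hcub := ev_cubic_pos (u*v) (-(u+v)) 1 (by nlinarith)
  obtain ⟨δ, ⟨z1, z2, hz2, hz12, hsum, hsq, hprod⟩, hcubδ, hδ⟩ :=
    (hM.and (hcub.and ev_pos_delta)).exists
  refine ⟨z1, z2, 0 + 1*δ, by linarith, hz2, by linarith, hsum, hsq, ?_⟩
  rw [hprod]; nlinarith [hcubδ]

lemma continuous_quarticF (n : ℕ) (a b c d e : ℝ) : Continuous (quarticF n a b c d e) := by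
  have hp : ∀ m : ℕ, Continuous (powSum n m) := by
    intro m
    unfold powSum
    exact continuous_finset_sum _ (fun i _ => (continuous_apply i).pow m)
  unfold quarticF
  fun_prop (disch := exact hp _)

lemma exists_minimizer (n : ℕ) (hn : 2 ≤ n) (a b c d e : ℝ) :
    ∃ x ∈ stdSimplex ℝ (Fin n),
      (∀ y ∈ stdSimplex ℝ (Fin n), quarticF n a b c d e x ≤ quarticF n a b c d e y) ∧
      (∀ y ∈ stdSimplex ℝ (Fin n), quarticF n a b c d e y = quarticF n a b c d e x →
        powSum n 3 y ≤ powSum n 3 x) := by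
  have hcpt : IsCompact (stdSimplex ℝ (Fin n)) := isCompact_stdSimplex _ _
  have hne : (stdSimplex ℝ (Fin n)).Nonempty := by
    refine ⟨fun _ => (n:ℝ)⁻¹, fun i => by positivity, ?_⟩
    rw [Finset.sum_const, Finset.card_univ, Fintype.card_fin]
    rw [nsmul_eq_mul]
    field_simp
  obtain ⟨x₀, hx₀S, hx₀⟩ := hcpt.exists_isMinOn hne (continuous_quarticF n a b c d e).continuousOn
  set K := stdSimplex ℝ (Fin n) ∩ {y | quarticF n a b c d e y = quarticF n a b c d e x₀} with hK
  have hKcpt : IsCompact K :=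
    hcpt.inter_right (isClosed_eq (continuous_quarticF n a b c d e) continuous_const)
  have hKne : K.Nonempty := ⟨x₀, hx₀S, rfl⟩
  have hp3 : Continuous (powSum n 3) := by
    unfold powSum
    exact continuous_finset_sum _ (fun i _ => (continuous_apply i).pow 3)
  obtain ⟨x, hxK, hxmax⟩ := hKcpt.exists_isMaxOn hKne hp3.continuousOn
  refine ⟨x, hxK.1, ?_, ?_⟩
  · intro y hy
    have : quarticF n a b c d e x = quarticF n a b c d e x₀ := hxK.2
    rw [this]
    exact hx₀ hy
  · intro y hy hfy
    have hyK : y ∈ K := ⟨hy, by simp only [Set.mem_setOf_eq]; rw [hfy]; exact hxK.2⟩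
    exact hxmax hyK

/-- core: a (min, p3-max) point has no three indices with distinct positive values
in decreasing order -/
lemma core_no_three (n : ℕ) (a b c d e : ℝ) (x : Fin n → ℝ) (hxS : x ∈ stdSimplex ℝ (Fin n))
    (hmin : ∀ y ∈ stdSimplex ℝ (Fin n), quarticF n a b c d e x ≤ quarticF n a b c d e y)
    (hmax : ∀ y ∈ stdSimplex ℝ (Fin n), quarticF n a b c d e y = quarticF n a b c d e x →
        powSum n 3 y ≤ powSum n 3 x)
    {i j k : Fin n} (hij : i ≠ j) (hik : i ≠ k) (hjk : j ≠ k)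
    (hk : 0 < x k) (hkj : x k < x j) (hji : x j < x i) : False := by
  obtain ⟨z1, z2, z3, hz1, hz2, hz3, hsum, hsq, hgt⟩ :=
    exists_up3 (x i) (x j) (x k) hk hkj hji
  obtain ⟨w1, w2, w3, hw1, hw2, hw3, hsum', hsq', hlt⟩ :=
    exists_down3 (x i) (x j) (x k) hk hkj hji
  have hmem : ∀ c1 c2 c3 : ℝ, 0 < c1 → 0 < c2 → 0 < c3 → c1+c2+c3 = x i + x j + x k →
      upd3 x i j k c1 c2 c3 ∈ stdSimplex ℝ (Fin n) := by
    intro c1 c2 c3 h1 h2 h3 hs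
    constructor
    · intro l
      rcases eq_or_ne l i with rfl | hli
      · rw [upd3_apply_i x hij hik]; exact le_of_lt h1
      rcases eq_or_ne l j with rfl | hlj
      · rw [upd3_apply_j x hjk]; exact le_of_lt h2
      rcases eq_or_ne l k with rfl | hlk
      · rw [upd3_apply_k x]; exact le_of_lt h3
      · rw [upd3_apply_other x hli hlj hlk]; exact hxS.1 l
    · have := sum_upd3 x hij hik hjk c1 c2 c3 (fun t => t)
      rw [this, hxS.2]
      linarith
  have hyS := hmem z1 z2 z3 hz1 hz2 hz3 hsum
  have hwS := hmem w1 w2 w3 hw1 hw2 hw3 hsum'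
  have hfy := quarticF_upd3 a b c d e x hij hik hjk hsum hsq
  have hfw := quarticF_upd3 a b c d e x hij hik hjk hsum' hsq'
  have h1 := hmin _ hyS
  have h2 := hmin _ hwS
  rw [hfy] at h1
  rw [hfw] at h2
  set β := 4*a*(x i + x j + x k) + 3*b*(powSum n 1 x) with hβ
  have hβ0 : β = 0 := by nlinarith
  have hfy0 : quarticF n a b c d e (upd3 x i j k z1 z2 z3) = quarticF n a b c d e x := by
    rw [hfy, hβ0]; ring
  have h3 := hmax _ hyS hfy0
  rw [powSum3_upd3 x hij hik hjk hsum hsq] at h3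
  nlinarith

/-- no three indices with pairwise distinct positive values, unordered version -/
lemma no_three_distinct (n : ℕ) (a b c d e : ℝ) (x : Fin n → ℝ)
    (hxS : x ∈ stdSimplex ℝ (Fin n))
    (hmin : ∀ y ∈ stdSimplex ℝ (Fin n), quarticF n a b c d e x ≤ quarticF n a b c d e y)
    (hmax : ∀ y ∈ stdSimplex ℝ (Fin n), quarticF n a b c d e y = quarticF n a b c d e x →
        powSum n 3 y ≤ powSum n 3 x)
    {i j k : Fin n} (hij : i ≠ j) (hik : i ≠ k) (hjk : j ≠ k)
    (hi : 0 < x i) (hj : 0 < x j) (hk : 0 < x k)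
    (vij : x i ≠ x j) (vik : x i ≠ x k) (vjk : x j ≠ x k) : False := by
  rcases lt_trichotomy (x i) (x j) with h1 | h1 | h1
  · rcases lt_trichotomy (x i) (x k) with h2 | h2 | h2
    · rcases lt_trichotomy (x j) (x k) with h3 | h3 | h3
      · exact core_no_three n a b c d e x hxS hmin hmax hjk.symm hik.symm hij.symm hi h1 h3
      · exact absurd h3 vjk
      · exact core_no_three n a b c d e x hxS hmin hmax hjk hij.symm hik.symm hi h2 h3
    · exact absurd h2 vik
    · exact core_no_three n a b c d e x hxS hmin hmax hij.symm hjk hik hk h2 h1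
  · exact absurd h1 vij
  · rcases lt_trichotomy (x j) (x k) with h3 | h3 | h3
    · rcases lt_trichotomy (x i) (x k) with h2 | h2 | h2
      · exact core_no_three n a b c d e x hxS hmin hmax hik.symm hjk.symm hij hj h1 h2
      · exact absurd h2 vik
      · exact core_no_three n a b c d e x hxS hmin hmax hik hij hjk.symm hj h3 h2
    · exact absurd h3 vjk
    · exact core_no_three n a b c d e x hxS hmin hmax hij hik hjk hk h3 h1

/-- power sums of a one-positive-value configuration -/
lemma powSum_one_val {n : ℕ} (x : Fin n → ℝ) (v : ℝ) (hvals : ∀ i, x i = 0 ∨ x i = v)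
    {m : ℕ} (hm : 1 ≤ m) :
    powSum n m x = (univ.filter fun i => x i = v).card * v ^ m := by
  classical
  unfold powSum
  rw [← Finset.sum_filter_add_sum_filter_not univ (fun i => x i = v)]
  have h1 : ∑ i ∈ univ.filter (fun i => x i = v), x i ^ m
      = (univ.filter fun i => x i = v).card * v ^ m := by
    rw [Finset.sum_congr rfl (fun i hi => by rw [(Finset.mem_filter.mp hi).2])]
    simp [mul_comm]
  have h2 : ∑ i ∈ univ.filter (fun i => ¬ x i = v), x i ^ m = 0 := by
    apply Finset.sum_eq_zero
    intro i hi
    have := (Finset.mem_filter.mp hi).2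
    rcases hvals i with h | h
    · rw [h]; exact zero_pow (by omega)
    · exact absurd h this
  rw [h1, h2]; ring

/-- power sums of a two-positive-value configuration -/
lemma powSum_two_val {n : ℕ} (x : Fin n → ℝ) (u v : ℝ) (huv : u ≠ v)
    (hvals : ∀ i, x i = 0 ∨ x i = u ∨ x i = v) {m : ℕ} (hm : 1 ≤ m) :
    powSum n m x = (univ.filter fun i => x i = u).card * u ^ m
      + (univ.filter fun i => x i = v).card * v ^ m := by
  classical
  unfold powSum
  rw [← Finset.sum_filter_add_sum_filter_not univ (fun i => x i = u)]
  have h1 : ∑ i ∈ univ.filter (fun i => x i = u), x i ^ m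
      = (univ.filter fun i => x i = u).card * u ^ m := by
    rw [Finset.sum_congr rfl (fun i hi => by rw [(Finset.mem_filter.mp hi).2])]
    simp [mul_comm]
  have h2 : ∑ i ∈ univ.filter (fun i => ¬ x i = u), x i ^ m
      = (univ.filter fun i => x i = v).card * v ^ m := by
    have hsub : univ.filter (fun i => x i = v) = (univ.filter (fun i => ¬ x i = u)).filter
        (fun i => x i = v) := by
      ext i
      simp only [Finset.mem_filter, Finset.mem_univ, true_and]
      constructor
      · intro h; exact ⟨by rw [h]; exact fun hc => huv hc.symm, h⟩
      · intro h; exact h.2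
    rw [← Finset.sum_filter_add_sum_filter_not (univ.filter (fun i => ¬ x i = u))
      (fun i => x i = v), ← hsub]
    have e1 : ∑ i ∈ univ.filter (fun i => x i = v), x i ^ m
        = (univ.filter fun i => x i = v).card * v ^ m := by
      rw [Finset.sum_congr rfl (fun i hi => by rw [(Finset.mem_filter.mp hi).2])]
      simp [mul_comm]
    have e2 : ∑ i ∈ (univ.filter (fun i => ¬ x i = u)).filter (fun i => ¬ x i = v), x i ^ m
        = 0 := by
      apply Finset.sum_eq_zero
      intro i hi
      simp only [Finset.mem_filter, Finset.mem_univ, true_and] at hi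
      rcases hvals i with h | h | h
      · rw [h]; exact zero_pow (by omega)
      · exact absurd h hi.1
      · exact absurd h hi.2
    rw [e1, e2]; ring
  rw [h1, h2]

lemma card_two_val {n : ℕ} (x : Fin n → ℝ) (u v : ℝ) (huv : u ≠ v) :
    (univ.filter fun i => x i = u).card + (univ.filter fun i => x i = v).card ≤ n := by
  classical
  rw [← Finset.card_union_of_disjoint]
  · calc _ ≤ (univ : Finset (Fin n)).card := Finset.card_le_card (Finset.subset_univ _)
      _ = n := by simp
  · rw [Finset.disjoint_filter]
    intro i _ h1 h2
    exact huv (h1 ▸ h2 ▸ rfl)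

/-- structure of values at the chosen minimizer -/
lemma values_structure {n : ℕ} (x : Fin n → ℝ) (hxS : x ∈ stdSimplex ℝ (Fin n))
    (H : ∀ i j k : Fin n, i ≠ j → i ≠ k → j ≠ k → 0 < x i → 0 < x j → 0 < x k →
      x i ≠ x j → x i ≠ x k → x j ≠ x k → False) :
    ∃ u v : ℝ, 0 < v ∧ v ≤ u ∧ (∀ i, x i = 0 ∨ x i = u ∨ x i = v) ∧
      (∃ i, x i = u) ∧ (∃ i, x i = v) := by
  classical
  set V : Finset ℝ := (univ.filter fun i => 0 < x i).image x with hV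
  have hmemV : ∀ i, 0 < x i → x i ∈ V := by
    intro i hi
    exact Finset.mem_image_of_mem x (Finset.mem_filter.mpr ⟨Finset.mem_univ i, hi⟩)
  have hVpos : ∀ t ∈ V, 0 < t ∧ ∃ i, x i = t := by
    intro t ht
    obtain ⟨i, hi, rfl⟩ := Finset.mem_image.mp ht
    exact ⟨(Finset.mem_filter.mp hi).2, i, rfl⟩
  have hne : V.Nonempty := by
    have hsum : ∑ i, x i = 1 := hxS.2
    have : ∃ i, x i ≠ 0 := by
      by_contra hc
      push_neg at hc
      rw [Finset.sum_congr rfl (fun i _ => hc i)] at hsum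
      simp at hsum
    obtain ⟨i, hi⟩ := this
    exact ⟨x i, hmemV i (lt_of_le_of_ne (hxS.1 i) (Ne.symm hi))⟩
  have hcard : V.card ≤ 2 := by
    by_contra hc
    push_neg at hc
    obtain ⟨t1, t2, t3, ht1, ht2, ht3, h12, h13, h23⟩ := Finset.two_lt_card_iff.mp hc
    obtain ⟨hp1, i, hi⟩ := hVpos t1 ht1
    obtain ⟨hp2, j, hj⟩ := hVpos t2 ht2
    obtain ⟨hp3, k, hk⟩ := hVpos t3 ht3
    subst hi hj hk
    exact H i j k (fun h => h12 (by rw [h])) (fun h => h13 (by rw [h]))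
      (fun h => h23 (by rw [h])) hp1 hp2 hp3 h12 h13 h23
  have hzero_or : ∀ i, x i = 0 ∨ x i ∈ V := by
    intro i
    rcases eq_or_lt_of_le (hxS.1 i) with h | h
    · exact Or.inl h.symm
    · exact Or.inr (hmemV i h)
  interval_cases h : V.card
  · exact absurd (Finset.card_eq_zero.mp h) (Finset.nonempty_iff_ne_empty.mp hne)
  · obtain ⟨v, hv⟩ := Finset.card_eq_one.mp h
    obtain ⟨hvpos, hvex⟩ := hVpos v (by rw [hv]; exact Finset.mem_singleton_self v)
    refine ⟨v, v, hvpos, le_refl v, ?_, hvex, hvex⟩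
    intro i
    rcases hzero_or i with h0 | hmem
    · exact Or.inl h0
    · rw [hv] at hmem
      exact Or.inr (Or.inl (Finset.mem_singleton.mp hmem))
  · obtain ⟨p, q, hpq, hV2⟩ := Finset.card_eq_two.mp h
    obtain ⟨hppos, hpex⟩ := hVpos p (by rw [hV2]; simp)
    obtain ⟨hqpos, hqex⟩ := hVpos q (by rw [hV2]; simp)
    rcases le_total q p with hle | hle
    · refine ⟨p, q, hqpos, hle, ?_, hpex, hqex⟩
      intro i
      rcases hzero_or i with h0 | hmem
      · exact Or.inl h0
      · rw [hV2] at hmem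
        rcases Finset.mem_insert.mp hmem with h' | h'
        · exact Or.inr (Or.inl h')
        · exact Or.inr (Or.inr (Finset.mem_singleton.mp h'))
    · refine ⟨q, p, hppos, hle, ?_, hqex, hpex⟩
      intro i
      rcases hzero_or i with h0 | hmem
      · exact Or.inl h0
      · rw [hV2] at hmem
        rcases Finset.mem_insert.mp hmem with h' | h'
        · exact Or.inr (Or.inr h')
        · exact Or.inr (Or.inl (Finset.mem_singleton.mp h'))

/-- sum of powers over a two-block configuration -/
lemma powSum_blocks {n : ℕ} (A B : Finset (Fin n)) (hAB : Disjoint A B) (U W : ℝ)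
    (y : Fin n → ℝ) (hU : ∀ i ∈ A, y i = U) (hW : ∀ i ∈ B, y i = W)
    (h0 : ∀ i, i ∉ A → i ∉ B → y i = 0) {m : ℕ} (hm : 1 ≤ m) :
    powSum n m y = A.card * U ^ m + B.card * W ^ m := by
  classical
  unfold powSum
  rw [← Finset.sum_sdiff (Finset.subset_univ (A ∪ B)), Finset.sum_union hAB]
  have h1 : ∑ i ∈ univ \ (A ∪ B), y i ^ m = 0 := by
    apply Finset.sum_eq_zero
    intro i hi
    simp only [Finset.mem_sdiff, Finset.mem_union] at hi
    push_neg at hi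
    rw [h0 i hi.2.1 hi.2.2]
    exact zero_pow (by omega)
  have h2 : ∑ i ∈ A, y i ^ m = A.card * U ^ m := by
    rw [Finset.sum_congr rfl (fun i hi => by rw [hU i hi])]
    simp [mul_comm]
  have h3 : ∑ i ∈ B, y i ^ m = B.card * W ^ m := by
    rw [Finset.sum_congr rfl (fun i hi => by rw [hW i hi])]
    simp [mul_comm]
  rw [h1, h2, h3]; ring

/-- first-order condition for the inter-block perturbation at a two-valued minimizer -/
lemma first_order {n : ℕ} (a b c d e : ℝ) (x : Fin n → ℝ) (hxS : x ∈ stdSimplex ℝ (Fin n))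
    (hmin : ∀ y ∈ stdSimplex ℝ (Fin n), quarticF n a b c d e x ≤ quarticF n a b c d e y)
    (u v : ℝ) (hv : 0 < v) (hvu : v < u)
    (hvals : ∀ i, x i = 0 ∨ x i = u ∨ x i = v)
    (r s : ℕ) (hrA : (univ.filter fun i => x i = u).card = r)
    (hsB : (univ.filter fun i => x i = v).card = s) (hr : 1 ≤ r) (hs : 1 ≤ s) :
    ((4*a+3*b*(r:ℝ)+4*c*(r:ℝ)+2*d*(r:ℝ)^2)*u^2 + (4*a+3*b*((r:ℝ)+(s:ℝ))+4*d*(r:ℝ)*(s:ℝ))*u*v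
      + (4*a+3*b*(s:ℝ)+4*c*(s:ℝ)+2*d*(s:ℝ)^2)*v^2) = 0 := by
  classical
  set R : ℝ := (r:ℝ) with hRdef
  set S : ℝ := (s:ℝ) with hSdef
  have hR1 : (1:ℝ) ≤ R := by rw [hRdef]; exact_mod_cast hr
  have hS1 : (1:ℝ) ≤ S := by rw [hSdef]; exact_mod_cast hs
  set A : Finset (Fin n) := univ.filter (fun i => x i = u) with hA
  set B : Finset (Fin n) := univ.filter (fun i => x i = v) with hB
  have hdisj : Disjoint A B := by
    rw [hA, hB, Finset.disjoint_filter]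
    intro i _ h1 h2
    rw [h1] at h2
    exact absurd h2 (ne_of_gt hvu)
  -- the curve
  set xd : ℝ → (Fin n → ℝ) := fun δ => fun i =>
    if x i = u then u + S*δ else if x i = v then v - R*δ else 0 with hxd
  have hblocks : ∀ δ : ℝ, ∀ m : ℕ, 1 ≤ m →
      powSum n m (xd δ) = R * (u + S*δ)^m + S * (v - R*δ)^m := by
    intro δ m hm
    have := powSum_blocks A B hdisj (u + S*δ) (v - R*δ) (xd δ)
      (fun i hi => by
        simp only [hxd]
        rw [if_pos (Finset.mem_filter.mp hi).2])
      (fun i hi => by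
        have h2 : x i = v := (Finset.mem_filter.mp hi).2
        simp only [hxd]
        rw [if_neg (by rw [h2]; exact ne_of_lt hvu), if_pos h2])
      (fun i hiA hiB => by
        have h1 : ¬ x i = u := fun h => hiA (hA ▸ Finset.mem_filter.mpr ⟨Finset.mem_univ i, h⟩)
        have h2 : ¬ x i = v := fun h => hiB (hB ▸ Finset.mem_filter.mpr ⟨Finset.mem_univ i, h⟩)
        simp only [hxd]
        rw [if_neg h1, if_neg h2]) hm
    rw [this, hrA, hsB]
  have hxpows : ∀ m : ℕ, 1 ≤ m → powSum n m x = R * u^m + S * v^m := by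
    intro m hm
    have := powSum_blocks A B hdisj u v x
      (fun i hi => (Finset.mem_filter.mp hi).2)
      (fun i hi => (Finset.mem_filter.mp hi).2)
      (fun i hiA hiB => by
        rcases hvals i with h | h | h
        · exact h
        · exact absurd (hA ▸ Finset.mem_filter.mpr ⟨Finset.mem_univ i, h⟩) hiA
        · exact absurd (hB ▸ Finset.mem_filter.mpr ⟨Finset.mem_univ i, h⟩) hiB) hm
    rw [this, hrA, hsB]
  have hsum1 : R * u + S * v = 1 := by
    have h1 : powSum n 1 x = ∑ i, x i := by
      unfold powSum; exact Finset.sum_congr rfl (fun i _ => pow_one _)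
    have := hxpows 1 (le_refl 1)
    rw [h1, hxS.2] at this
    simp only [pow_one] at this
    linarith
  -- membership for small δ
  have hRS : (0:ℝ) < R + S := by linarith
  set δ0 : ℝ := v / (R + S) with hδ0
  have hδ0pos : 0 < δ0 := by positivity
  have hmem : ∀ δ : ℝ, |δ| < δ0 → xd δ ∈ stdSimplex ℝ (Fin n) := by
    intro δ hδ
    have habs1 : -δ0 < δ ∧ δ < δ0 := abs_lt.mp hδ
    have hu' : 0 ≤ u + S*δ := by
      have h1 : S * δ0 ≤ v := by
        rw [hδ0]
        have h2 : S / (R+S) ≤ 1 := by rw [div_le_one hRS]; linarith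
        calc S * (v/(R+S)) = (S/(R+S)) * v := by ring
          _ ≤ 1 * v := mul_le_mul_of_nonneg_right h2 (le_of_lt hv)
          _ = v := one_mul v
      nlinarith [habs1.1, habs1.2, hS1]
    have hv' : 0 ≤ v - R*δ := by
      have h1 : R * δ0 < v := by
        rw [hδ0]
        have h2 : R/(R+S) < 1 := by rw [div_lt_one hRS]; linarith
        calc R * (v/(R+S)) = (R/(R+S)) * v := by ring
          _ < 1 * v := mul_lt_mul_of_pos_right h2 hv
          _ = v := one_mul v
      nlinarith [habs1.1, habs1.2, hR1]
    constructor
    · intro i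
      simp only [hxd]
      rcases hvals i with h | h | h
      · rw [if_neg (by rw [h]; exact ne_of_lt (by linarith)),
          if_neg (by rw [h]; exact ne_of_lt hv)]
      · rw [if_pos h]; exact hu'
      · rw [if_neg (by rw [h]; exact ne_of_lt hvu), if_pos h]; exact hv'
    · have h1 : ∑ i, (xd δ) i = powSum n 1 (xd δ) := by
        unfold powSum; exact Finset.sum_congr rfl (fun i _ => (pow_one _).symm)
      rw [h1, hblocks δ 1 (le_refl 1)]
      simp only [pow_one]
      linear_combination hsum1
  -- expansion of f along the curve
  set c1 : ℝ := (-2)*d*v^3*R*S^3 + (2)*d*u*v^2*R*S^3 + (-4)*d*u*v^2*R^2*S^2 + (4)*d*u^2*v*R^2*S^2 + (-2)*d*u^2*v*R^3*S + (2)*d*u^3*R^3*S + (-4)*c*v^3*R*S^2 + (4)*c*u*v^2*R*S^2 + (-4)*c*u^2*v*R^2*S + (4)*c*u^3*R^2*S + (-3)*b*v^3*R*S^2 + (-3)*b*u*v^2*R^2*S + (3)*b*u^2*v*R*S^2 + (3)*b*u^3*R^2*S + (-4)*a*v^3*R*S + (4)*a*u^3*R*S with hc1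
  set c2 : ℝ := (1)*d*v^2*R*S^4 + (1)*d*v^2*R^2*S^3 + (2)*d*u*v*R^2*S^3 + (2)*d*u*v*R^3*S^2 + (1)*d*u^2*R^3*S^2 + (1)*d*u^2*R^4*S + (2)*c*v^2*R*S^3 + (6)*c*v^2*R^2*S^2 + (-8)*c*u*v*R^2*S^2 + (6)*c*u^2*R^2*S^2 + (2)*c*u^2*R^3*S + (3)*b*v^2*R^2*S^2 + (3)*b*u*v*R*S^3 + (3)*b*u*v*R^3*S + (3)*b*u^2*R^2*S^2 + (6)*a*v^2*R^2*S + (6)*a*u^2*R*S^2 with hc2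
  set c3 : ℝ := (-4)*c*v*R^2*S^3 + (-4)*c*v*R^3*S^2 + (4)*c*u*R^2*S^3 + (4)*c*u*R^3*S^2 + (1)*b*v*R*S^4 + (-1)*b*v*R^3*S^2 + (1)*b*u*R^2*S^3 + (-1)*b*u*R^4*S + (-4)*a*v*R^3*S + (4)*a*u*R*S^3 with hc3
  set c4 : ℝ := (1)*c*R^2*S^4 + (2)*c*R^3*S^3 + (1)*c*R^4*S^2 + (1)*a*R*S^4 + (1)*a*R^4*S with hc4
  have hexp : ∀ δ : ℝ, quarticF n a b c d e (xd δ)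
      = quarticF n a b c d e x + c1*δ + c2*δ^2 + c3*δ^3 + c4*δ^4 := by
    intro δ
    unfold quarticF
    rw [hblocks δ 4 (by norm_num), hblocks δ 3 (by norm_num), hblocks δ 2 (by norm_num),
      hblocks δ 1 (by norm_num), hxpows 4 (by norm_num), hxpows 3 (by norm_num),
      hxpows 2 (by norm_num), hxpows 1 (by norm_num), hc1, hc2, hc3, hc4]
    ring
  have hlm : ∀ δ : ℝ, |δ| < δ0 → 0 ≤ c1*δ + c2*δ^2 + c3*δ^3 + c4*δ^4 := by
    intro δ hδ
    have := hmin _ (hmem δ hδ)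
    rw [hexp δ] at this
    linarith
  have hc10 : c1 = 0 := quartic_local_min c1 c2 c3 c4 δ0 hδ0pos hlm
  have hfactor : c1 = R*S*(u-v) * ((4*a+3*b*R+4*c*R+2*d*R^2)*u^2
      + (4*a+3*b*(R+S)+4*d*R*S)*u*v + (4*a+3*b*S+4*c*S+2*d*S^2)*v^2) := by
    rw [hc1]; ring
  rw [hc10] at hfactor
  have hRS0 : R*S*(u-v) ≠ 0 := by
    have : 0 < R*S*(u-v) := by
      apply mul_pos (mul_pos (by linarith) (by linarith))
      linarith
    exact ne_of_gt this
  rcases mul_eq_zero.mp hfactor.symm with h | h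
  · exact absurd h hRS0
  · exact h

/-- sliding a two-block configuration to a one-block configuration when the
inter-block derivative vanishes identically -/
lemma slide_eval (a b c d e u v R S : ℝ)
    (hα : 4*a+3*b*R+4*c*R+2*d*R^2 = 0)
    (hβ : 4*a+3*b*(R+S)+4*d*R*S = 0)
    (hγ : 4*a+3*b*S+4*c*S+2*d*S^2 = 0) :
    R^4 * (a*(R*u^4+S*v^4) + b*(R*u^3+S*v^3)*(R*u+S*v) + c*(R*u^2+S*v^2)^2
      + d*(R*u^2+S*v^2)*(R*u+S*v)^2 + e*(R*u+S*v)^4)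
    = (R*u+S*v)^4 * (a*R + b*R^2 + c*R^2 + d*R^3 + e*R^4) := by
  linear_combination (-((1/4)*v^4*R*S^4 + (-1/12)*v^4*R^2*S^3 + (1)*u*v^3*R^2*S^3
      + (-1/3)*u*v^3*R^3*S^2 + (3/2)*u^2*v^2*R^3*S^2 + (-1/2)*u^2*v^2*R^4*S
      + (1)*u^3*v*R^4*S)) * hα
    + (-((1/12)*v^4*R^2*S^3 + (-1/12)*v^4*R^3*S^2 + (1/3)*u*v^3*R^3*S^2
      + (-1/3)*u*v^3*R^4*S + (1/2)*u^2*v^2*R^4*S)) * hβ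
    + (-((1/12)*v^4*R^3*S^2 + (-1/4)*v^4*R^4*S + (1/3)*u*v^3*R^4*S)) * hγ

/-- a constant `fdrs` has vanishing `t²` and `t` coefficients -/
lemma const_coeffs (a b c d : ℝ) (r s : ℕ)
    (h : ∀ t₁ t₂ : ℝ, fdrs a b c d r s t₁ = fdrs a b c d r s t₂) :
    4*a+3*b*(r:ℝ)+4*c*(r:ℝ)+2*d*(r:ℝ)^2 = 0
      ∧ 4*a+3*b*((r:ℝ)+(s:ℝ))+4*d*(r:ℝ)*(s:ℝ) = 0 := by
  have h10 := h 1 0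
  have hm10 := h (-1) 0
  unfold fdrs at h10 hm10
  constructor
  · linear_combination h10/2 + hm10/2
  · linear_combination h10/2 - hm10/2

lemma fdrs_eval (a b c d : ℝ) (r s : ℕ) (u v : ℝ) (hv : v ≠ 0)
    (h : (4*a+3*b*(r:ℝ)+4*c*(r:ℝ)+2*d*(r:ℝ)^2)*u^2
      + (4*a+3*b*((r:ℝ)+(s:ℝ))+4*d*(r:ℝ)*(s:ℝ))*u*v
      + (4*a+3*b*(s:ℝ)+4*c*(s:ℝ)+2*d*(s:ℝ)^2)*v^2 = 0) :
    fdrs a b c d r s (u/v) = 0 := by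
  have hv2 : v^2 ≠ 0 := pow_ne_zero 2 hv
  have key : fdrs a b c d r s (u/v) * v^2
      = (4*a+3*b*(r:ℝ)+4*c*(r:ℝ)+2*d*(r:ℝ)^2)*u^2
        + (4*a+3*b*((r:ℝ)+(s:ℝ))+4*d*(r:ℝ)*(s:ℝ))*u*v
        + (4*a+3*b*(s:ℝ)+4*c*(s:ℝ)+2*d*(s:ℝ)^2)*v^2 := by
    unfold fdrs
    field_simp
    ring
  rw [h] at key
  exact (mul_eq_zero.mp key).resolve_right hv2

/-- nonnegativity of a quadratic on `[1/N, 1]` from endpoint and vertex information -/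
lemma quad_key (N c d e m : ℝ) (hN : 2 ≤ N)
    (h1 : 0 ≤ c + d + e) (hn : 0 ≤ c*N^2 + d*N^3 + e*N^4)
    (hvert : 0 < c → 2*c + d*N < 0 → 0 < 2*c + d → 0 ≤ 4*c*e - d^2)
    (hm1 : 1 ≤ N*m) (hm2 : m ≤ 1) : 0 ≤ c*m^2 + d*m + e := by
  have hNpos : (0:ℝ) < N := by linarith
  rcases le_or_gt c 0 with hc | hc
  · have key : N^3*(N-1)*(c*m^2+d*m+e)
        = (1-m)*(c*N^2 + d*N^3 + e*N^4) + (N*m-1)*N^3*(c+d+e)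
          + c*(N*m-1)*(m-1)*(N-1)*N^2 := by ring
    have hNN : 0 < N^3*(N-1) := mul_pos (by positivity) (by linarith)
    nlinarith [hNN, mul_nonneg (sub_nonneg.mpr hm2) hn,
      mul_nonneg (mul_nonneg (sub_nonneg.mpr hm1) (by positivity : (0:ℝ) ≤ N^3)) h1,
      mul_nonneg (mul_nonneg (mul_nonneg (neg_nonneg.mpr hc)
        (sub_nonneg.mpr hm1)) (sub_nonneg.mpr hm2))
        (mul_nonneg (by linarith : (0:ℝ) ≤ N-1) (by positivity : (0:ℝ) ≤ N^2))]
  · rcases le_or_gt (2*c + d) 0 with hd1 | hd1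
    · -- decreasing on the interval: q(m) ≥ q(1)
      nlinarith [mul_nonneg (sub_nonneg.mpr hm2) (by nlinarith : 0 ≤ -(c*(m+1)+d))]
    · rcases le_or_gt 0 (2*c + d*N) with hd2 | hd2
      · -- increasing: q(m) ≥ q(1/N) ≥ 0
        have hNsq : (0:ℝ) < N^2 := by positivity
        have hid : c*N^2+d*N^3+e*N^4 = N^2*(c+d*N+e*N^2) := by ring
        have hq1N : 0 ≤ c + d*N + e*N^2 := by nlinarith [hn, hid, hNsq]
        have h3 : 0 ≤ (N*m-1)*(c*(N*m+1)+d*N) := by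
          apply mul_nonneg (sub_nonneg.mpr hm1)
          nlinarith
        have hid2 : (N*m-1)*(c*(N*m+1)+d*N)
            = N^2*(c*m^2+d*m+e) - (c+d*N+e*N^2) := by ring
        nlinarith [h3, hq1N, hNsq, hid2]
      · have hv := hvert hc hd2 hd1
        nlinarith [sq_nonneg (2*c*m + d)]

set_option maxHeartbeats 1000000 in
lemma ab_zero_nonneg (n : ℕ) (hn : 2 ≤ n) (a b c d e : ℝ) (ha : a = 0) (hb : b = 0)
    (h1 : ∀ k : ℕ, 1 ≤ k → k ≤ n → quarticF n a b c d e (blockPt n k 0 1 0) ≥ 0)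
    (h2 : ∀ r s : ℕ, (r, s) ∈ Zf n a b →
       (∃ t₁ t₂ : ℝ, fdrs a b c d r s t₁ ≠ fdrs a b c d r s t₂) →
       ∀ t : ℝ, 1 < t → fdrs a b c d r s t = 0 →
         quarticF n a b c d e (blockPt n r s t 1) ≥ 0) :
    ∀ y ∈ stdSimplex ℝ (Fin n), 0 ≤ quarticF n a b c d e y := by
  subst ha hb
  set N : ℝ := (n:ℝ) with hNdef
  have hN2 : (2:ℝ) ≤ N := by rw [hNdef]; exact_mod_cast hn
  have hNpos : (0:ℝ) < N := by linarith
  set K : ℝ := N - 1 with hKdef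
  have hK1 : (1:ℝ) ≤ K := by linarith
  have hcast : ((n - 1 : ℕ) : ℝ) = K := by
    rw [hKdef, hNdef]
    have : 1 ≤ n := by omega
    push_cast [Nat.cast_sub this]
    ring
  clear_value N K
  -- endpoint values from h1
  have hq1 : 0 ≤ c + d + e := by
    have := h1 1 (le_refl 1) (by omega)
    unfold quarticF at this
    rw [powSum_blockPt 1 0 (by omega) 1 0 (le_refl 1),
      powSum_blockPt 1 0 (by omega) 1 0 (by norm_num),
      powSum_blockPt 1 0 (by omega) 1 0 (by norm_num),
      powSum_blockPt 1 0 (by omega) 1 0 (by norm_num)] at this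
    norm_num at this
    linarith
  have hqN : 0 ≤ c*N^2 + d*N^3 + e*N^4 := by
    have := h1 n (by omega) (le_refl n)
    unfold quarticF at this
    rw [powSum_blockPt n 0 (by omega) 1 0 (le_refl 1),
      powSum_blockPt n 0 (by omega) 1 0 (by norm_num),
      powSum_blockPt n 0 (by omega) 1 0 (by norm_num),
      powSum_blockPt n 0 (by omega) 1 0 (by norm_num)] at this
    norm_num at this
    rw [hNdef]
    linarith
  -- vertex condition from h2 via IVT
  have hvert : 0 < c → 2*c + d*N < 0 → 0 < 2*c + d → 0 ≤ 4*c*e - d^2 := by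
    intro hc hd2 hd1
    set g : ℝ → ℝ := fun t => fdrs 0 0 c d 1 (n-1) t with hg
    have hgsimp : ∀ t, g t = (4*c+2*d)*t^2 + 4*d*K*t + (4*c*K + 2*d*K^2) := by
      intro t
      rw [hg]
      unfold fdrs
      rw [hcast]
      push_cast
      ring
    have hg1 : g 1 < 0 := by
      rw [hgsimp 1, hKdef]
      nlinarith [mul_neg_of_pos_of_neg hNpos (show 2*(2*c+d*N) < 0 by linarith)]
    set Da : ℝ := |d| with hDa
    set T : ℝ := max 1 ((4*Da*K + 4*c*K + 2*Da*K^2 + 1)/(4*c+2*d)) with hT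
    have hT1 : 1 ≤ T := le_max_left _ _
    have hA : (0:ℝ) < 4*c + 2*d := by linarith
    have hTA : 4*Da*K + 4*c*K + 2*Da*K^2 + 1 ≤ (4*c+2*d)*T := by
      have hmx := le_max_right 1 ((4*Da*K + 4*c*K + 2*Da*K^2 + 1)/(4*c+2*d))
      rw [hT]
      calc 4*Da*K + 4*c*K + 2*Da*K^2 + 1
          = ((4*Da*K + 4*c*K + 2*Da*K^2 + 1)/(4*c+2*d)) * (4*c+2*d) := by field_simp
        _ ≤ (max 1 ((4*Da*K + 4*c*K + 2*Da*K^2 + 1)/(4*c+2*d))) * (4*c+2*d) :=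
            mul_le_mul_of_nonneg_right hmx (le_of_lt hA)
        _ = _ := by ring
    have hgT : 0 < g T := by
      rw [hgsimp T]
      have habs1 : -Da ≤ d := neg_abs_le d
      have hDa0 : 0 ≤ Da := abs_nonneg d
      have hK0 : (0:ℝ) ≤ K := by linarith
      have ht0 : (0:ℝ) < T := by linarith
      have p1 : (4*Da*K+4*c*K+2*Da*K^2+1)*T ≤ ((4*c+2*d)*T)*T :=
        mul_le_mul_of_nonneg_right hTA (le_of_lt ht0)
      have p2 : (4*c*K + 2*Da*K^2 + 1)*1 ≤ (4*c*K+2*Da*K^2+1)*T := by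
        apply mul_le_mul_of_nonneg_left hT1
        positivity
      have p3 : (-(4*Da*K))*T ≤ (4*d*K)*T := by
        apply mul_le_mul_of_nonneg_right _ (le_of_lt ht0)
        nlinarith
      have p4 : -(2*Da*K^2) ≤ 2*d*K^2 := by nlinarith [sq_nonneg K]
      have p5 : 0 < c*K := mul_pos hc (by linarith)
      nlinarith [p1, p2, p3, p4, p5]
    have hgc : ContinuousOn g (Set.Icc 1 T) := by
      have : Continuous g := by
        have : g = fun t => (4*c+2*d)*t^2 + 4*d*K*t + (4*c*K + 2*d*K^2) := funext hgsimp
        rw [this]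
        fun_prop
      exact this.continuousOn
    obtain ⟨t, htmem, hgt⟩ := intermediate_value_Icc hT1 hgc ⟨le_of_lt hg1, le_of_lt hgT⟩
    have ht1 : 1 < t := by
      rcases eq_or_lt_of_le htmem.1 with h | h
      · exfalso; rw [← h] at hgt; linarith
      · exact h
    -- nonconstancy of fdrs 0 0 c d 1 (n-1)
    have hnonconst : ∃ t₁ t₂ : ℝ, fdrs 0 0 c d 1 (n-1) t₁ ≠ fdrs 0 0 c d 1 (n-1) t₂ := by
      by_contra hcon
      push_neg at hcon
      have e1 := hcon 1 0
      have e2 := hcon (-1) 0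
      unfold fdrs at e1 e2
      rw [hcast] at e1 e2
      push_cast at e1 e2
      have h8 : 8*(d*K) = 0 := by linear_combination e1 - e2
      have hdK : d*K = 0 := by linarith
      rcases mul_eq_zero.mp hdK with hd0 | hK0
      · rw [hd0] at e1
        have hc0 : c = 0 := by linear_combination e1/4
        linarith
      · linarith
    -- membership in Zf
    have hmem : ((1:ℕ), n-1) ∈ Zf n 0 0 := by
      left
      exact ⟨n-1, by omega, le_refl _, Or.inr rfl⟩
    have hval := h2 1 (n-1) hmem hnonconst t ht1 hgt
    set X : ℝ := t^2 + K with hX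
    set Y : ℝ := (t + K)^2 with hY
    clear_value X Y
    have hexp : quarticF n 0 0 c d e (blockPt n 1 (n-1) t 1)
        = c*X^2 + d*X*Y + e*Y^2 := by
      unfold quarticF
      rw [powSum_blockPt 1 (n-1) (by omega) t 1 (le_refl 1),
        powSum_blockPt 1 (n-1) (by omega) t 1 (by norm_num),
        powSum_blockPt 1 (n-1) (by omega) t 1 (by norm_num),
        powSum_blockPt 1 (n-1) (by omega) t 1 (by norm_num), hcast, hX, hY]
      push_cast
      ring
    rw [hexp] at hval
    have hroot : 2*c*X + d*Y = 0 := by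
      have h' := hgt
      rw [hgsimp t] at h'
      rw [hX, hY]
      linarith
    have hYpos : 0 < Y := by rw [hY]; positivity
    have hid : Y^2 * (4*c*e - d^2) = 4*c*(c*X^2 + d*X*Y + e*Y^2) - (2*c*X + d*Y)^2 := by ring
    rw [hroot] at hid
    have h9 : 0 ≤ 4*c*(c*X^2 + d*X*Y + e*Y^2) := mul_nonneg (by linarith) hval
    have hfin : 0 ≤ Y^2*(4*c*e - d^2) := by rw [hid]; simpa using h9
    have hY2 : (0:ℝ) < Y^2 := by positivity
    by_contra hneg
    push_neg at hneg
    have hcontra := mul_neg_of_pos_of_neg hY2 hneg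
    linarith
  -- conclude for arbitrary simplex points
  intro y hy
  have hsum : ∑ i, y i = 1 := hy.2
  have hp1 : powSum n 1 y = 1 := by
    unfold powSum
    rw [Finset.sum_congr rfl (fun i _ => pow_one (y i)), hsum]
  set m : ℝ := powSum n 2 y with hm
  clear_value m
  have hm2 : m ≤ 1 := by
    rw [hm]
    unfold powSum
    calc ∑ i, y i ^ 2 ≤ ∑ i, y i := by
          apply Finset.sum_le_sum
          intro i _
          have h1 : y i ≤ 1 := by
            rw [← hsum]
            exact Finset.single_le_sum (fun j _ => hy.1 j) (Finset.mem_univ i)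
          nlinarith [hy.1 i]
      _ = 1 := hsum
  have hm1 : 1 ≤ N * m := by
    have := Finset.sum_mul_sq_le_sq_mul_sq univ (fun _ => (1:ℝ)) y
    simp only [one_pow, one_mul, Finset.sum_const, Finset.card_univ, Fintype.card_fin,
      nsmul_eq_mul, mul_one] at this
    rw [hsum] at this
    rw [hm]
    unfold powSum
    calc (1:ℝ) = 1^2 := by norm_num
      _ ≤ N * ∑ i, y i ^ 2 := by
          rw [hNdef]
          exact_mod_cast this
  have hfy : quarticF n 0 0 c d e y = c*m^2 + d*m + e := by
    unfold quarticF
    rw [hp1, hm]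
    ring
  rw [hfy]
  exact quad_key N c d e m hN2 hq1 hqN hvert hm1 hm2

/-- first-order inequality from a minimizer and a feasible circle point -/
lemma min_perturb {n : ℕ} (a b c d e : ℝ) (x : Fin n → ℝ) (hxS : x ∈ stdSimplex ℝ (Fin n))
    (hmin : ∀ y ∈ stdSimplex ℝ (Fin n), quarticF n a b c d e x ≤ quarticF n a b c d e y)
    {i j k : Fin n} (hij : i ≠ j) (hik : i ≠ k) (hjk : j ≠ k) {z1 z2 z3 : ℝ}
    (hz1 : 0 ≤ z1) (hz2 : 0 ≤ z2) (hz3 : 0 ≤ z3)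
    (h1 : z1 + z2 + z3 = x i + x j + x k)
    (h2 : z1^2 + z2^2 + z3^2 = (x i)^2 + (x j)^2 + (x k)^2) :
    0 ≤ (4*a*(x i + x j + x k) + 3*b*(powSum n 1 x)) * (z1*z2*z3 - x i * x j * x k) := by
  have hyS : upd3 x i j k z1 z2 z3 ∈ stdSimplex ℝ (Fin n) := by
    constructor
    · intro l
      rcases eq_or_ne l i with rfl | hli
      · rw [upd3_apply_i x hij hik]; exact hz1
      rcases eq_or_ne l j with rfl | hlj
      · rw [upd3_apply_j x hjk]; exact hz2
      rcases eq_or_ne l k with rfl | hlk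
      · rw [upd3_apply_k x]; exact hz3
      · rw [upd3_apply_other x hli hlj hlk]; exact hxS.1 l
    · have := sum_upd3 x hij hik hjk z1 z2 z3 (fun t => t)
      rw [this, hxS.2]
      linarith
  have := hmin _ hyS
  rw [quarticF_upd3 a b c d e x hij hik hjk h1 h2] at this
  linarith

/-- reduction from the orthant to the simplex by homogeneity -/
lemma orthant_of_simplex (n : ℕ) (a b c d e : ℝ)
    (h : ∀ y ∈ stdSimplex ℝ (Fin n), 0 ≤ quarticF n a b c d e y) :
    ∀ x : Fin n → ℝ, (∀ i, 0 ≤ x i) → quarticF n a b c d e x ≥ 0 := by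
  intro x hx
  set σ : ℝ := ∑ i, x i with hσ
  rcases eq_or_lt_of_le (Finset.sum_nonneg (fun i _ => hx i) : (0:ℝ) ≤ σ) with h0 | hpos
  · -- all coordinates vanish
    have hz : ∀ i ∈ univ, x i = 0 := by
      intro i _
      exact (Finset.sum_eq_zero_iff_of_nonneg (fun j _ => hx j)).mp h0.symm i (Finset.mem_univ i)
    have hps : ∀ m : ℕ, 1 ≤ m → powSum n m x = 0 := by
      intro m hm
      unfold powSum
      apply Finset.sum_eq_zero
      intro i hi
      rw [hz i hi]
      exact zero_pow (by omega)
    unfold quarticF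
    rw [hps 4 (by norm_num), hps 3 (by norm_num), hps 2 (by norm_num), hps 1 (by norm_num)]
    norm_num
  · set y : Fin n → ℝ := fun i => x i / σ with hy
    have hyS : y ∈ stdSimplex ℝ (Fin n) := by
      constructor
      · intro i
        show 0 ≤ x i / σ
        exact div_nonneg (hx i) (le_of_lt hpos)
      · show ∑ i, x i / σ = 1
        rw [← Finset.sum_div, ← hσ]
        exact div_self (hpos.ne' : σ ≠ 0)
    have hpow : ∀ m : ℕ, powSum n m x = σ^m * powSum n m y := by
      intro m
      unfold powSum
      rw [Finset.mul_sum]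
      apply Finset.sum_congr rfl
      intro i _
      show x i ^ m = σ ^ m * (x i / σ) ^ m
      rw [div_pow]
      field_simp
      rw [mul_div_assoc, div_self (pow_ne_zero _ (hpos.ne' : σ ≠ 0)), mul_one]
    have hfx : quarticF n a b c d e x = σ^4 * quarticF n a b c d e y := by
      unfold quarticF
      rw [hpow 4, hpow 3, hpow 2, hpow 1]
      ring
    rw [hfx]
    have := h y hyS
    positivity

lemma endgame (n : ℕ) (hn : 2 ≤ n) (a b c d e : ℝ)
    (h1 : ∀ k : ℕ, 1 ≤ k → k ≤ n → quarticF n a b c d e (blockPt n k 0 1 0) ≥ 0)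
    (h2 : ∀ r s : ℕ, (r, s) ∈ Zf n a b →
       (∃ t₁ t₂ : ℝ, fdrs a b c d r s t₁ ≠ fdrs a b c d r s t₂) →
       ∀ t : ℝ, 1 < t → fdrs a b c d r s t = 0 →
         quarticF n a b c d e (blockPt n r s t 1) ≥ 0)
    (x : Fin n → ℝ) (u v : ℝ) (hv : 0 < v) (hvu : v < u) (r s : ℕ)
    (hr : 1 ≤ r) (hs : 1 ≤ s) (hrs : r + s ≤ n)
    (hxp : ∀ m : ℕ, 1 ≤ m → powSum n m x = (r:ℝ) * u^m + (s:ℝ) * v^m)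
    (hp1 : (r:ℝ)*u + (s:ℝ)*v = 1)
    (hBq : (4*a+3*b*(r:ℝ)+4*c*(r:ℝ)+2*d*(r:ℝ)^2)*u^2
      + (4*a+3*b*((r:ℝ)+(s:ℝ))+4*d*(r:ℝ)*(s:ℝ))*u*v
      + (4*a+3*b*(s:ℝ)+4*c*(s:ℝ)+2*d*(s:ℝ)^2)*v^2 = 0)
    (hZ : (r, s) ∈ Zf n a b) :
    0 ≤ quarticF n a b c d e x := by
  set R : ℝ := (r:ℝ) with hR
  set S : ℝ := (s:ℝ) with hS
  have hR1 : (1:ℝ) ≤ R := by rw [hR]; exact_mod_cast hr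
  have hS1 : (1:ℝ) ≤ S := by rw [hS]; exact_mod_cast hs
  clear_value R S
  have hv0 : v ≠ 0 := ne_of_gt hv
  have hfxe : quarticF n a b c d e x
      = a*(R*u^4+S*v^4) + b*(R*u^3+S*v^3)*(R*u+S*v) + c*(R*u^2+S*v^2)^2
        + d*(R*u^2+S*v^2)*(R*u+S*v)^2 + e*(R*u+S*v)^4 := by
    unfold quarticF
    rw [hxp 4 (by norm_num), hxp 3 (by norm_num), hxp 2 (by norm_num), hxp 1 (by norm_num)]
    ring
  by_cases hnc : ∃ t₁ t₂ : ℝ, fdrs a b c d r s t₁ ≠ fdrs a b c d r s t₂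
  · have hroot : fdrs a b c d r s (u/v) = 0 := by
      apply fdrs_eval a b c d r s u v hv0
      rw [← hR, ← hS]
      exact hBq
    have ht1 : 1 < u/v := (one_lt_div hv).mpr hvu
    have hF := h2 r s hZ hnc (u/v) ht1 hroot
    have hbpF : quarticF n a b c d e (blockPt n r s (u/v) 1)
        = a*(R*(u/v)^4+S) + b*(R*(u/v)^3+S)*(R*(u/v)+S) + c*(R*(u/v)^2+S)^2
          + d*(R*(u/v)^2+S)*(R*(u/v)+S)^2 + e*(R*(u/v)+S)^4 := by
      unfold quarticF
      rw [powSum_blockPt r s hrs (u/v) 1 (le_refl 1),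
        powSum_blockPt r s hrs (u/v) 1 (by norm_num),
        powSum_blockPt r s hrs (u/v) 1 (by norm_num),
        powSum_blockPt r s hrs (u/v) 1 (by norm_num), ← hR, ← hS]
      norm_num
    have hkey : quarticF n a b c d e x
        = v^4 * quarticF n a b c d e (blockPt n r s (u/v) 1) := by
      rw [hbpF, hfxe]
      field_simp
    rw [hkey]
    have : (0:ℝ) ≤ quarticF n a b c d e (blockPt n r s (u/v) 1) := hF
    positivity
  · push_neg at hnc
    obtain ⟨hα, hβ⟩ := const_coeffs a b c d r s (fun t₁ t₂ => hnc t₁ t₂)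
    rw [← hR] at hα
    rw [← hR, ← hS] at hβ
    have hγ : 4*a+3*b*S+4*c*S+2*d*S^2 = 0 := by
      have hγv : (4*a+3*b*S+4*c*S+2*d*S^2) * v^2 = 0 := by
        linear_combination hBq - u^2*hα - u*v*hβ
      rcases mul_eq_zero.mp hγv with h | h
      · exact h
      · exact absurd h (pow_ne_zero 2 hv0)
    have hslide := slide_eval a b c d e u v R S hα hβ hγ
    have hbp1 : quarticF n a b c d e (blockPt n r 0 1 0)
        = a*R + b*R^2 + c*R^2 + d*R^3 + e*R^4 := by
      unfold quarticF
      rw [powSum_blockPt r 0 (by omega) 1 0 (le_refl 1),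
        powSum_blockPt r 0 (by omega) 1 0 (by norm_num),
        powSum_blockPt r 0 (by omega) 1 0 (by norm_num),
        powSum_blockPt r 0 (by omega) 1 0 (by norm_num), ← hR]
      norm_num
      ring
    have hval := h1 r hr (by omega)
    rw [hbp1] at hval
    have hfin : R^4 * quarticF n a b c d e x = a*R + b*R^2 + c*R^2 + d*R^3 + e*R^4 := by
      rw [hfxe, hslide, hp1]
      norm_num
    have hR4 : (0:ℝ) < R^4 := by positivity
    nlinarith [hfin, hval, hR4]

set_option maxHeartbeats 2000000 in
/-- Finite test sets for nonnegativity of a symmetric quartic on the nonnegative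
orthant. -/
theorem quartic_orthant_test_sets (n : ℕ) (hn : 2 ≤ n) (a b c d e : ℝ) :
    (∀ x : Fin n → ℝ, (∀ i, 0 ≤ x i) → quarticF n a b c d e x ≥ 0) ↔
    ((∀ k : ℕ, 1 ≤ k → k ≤ n → quarticF n a b c d e (blockPt n k 0 1 0) ≥ 0) ∧
     (∀ r s : ℕ, (r, s) ∈ Zf n a b →
       (∃ t₁ t₂ : ℝ, fdrs a b c d r s t₁ ≠ fdrs a b c d r s t₂) →
       ∀ t : ℝ, 1 < t → fdrs a b c d r s t = 0 →
         quarticF n a b c d e (blockPt n r s t 1) ≥ 0)) := by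
  constructor
  · intro hf
    constructor
    · intro k _ _
      apply hf
      intro i
      unfold blockPt
      split_ifs <;> norm_num
    · intro r s _ _ t ht _
      apply hf
      intro i
      unfold blockPt
      split_ifs <;> first | linarith | norm_num
  · rintro ⟨h1, h2⟩
    apply orthant_of_simplex
    obtain ⟨x, hxS, hmin, hmax⟩ := exists_minimizer n hn a b c d e
    suffices hx : 0 ≤ quarticF n a b c d e x by
      intro y hy
      exact le_trans hx (hmin y hy)
    have hp1x : powSum n 1 x = 1 := by
      unfold powSum
      rw [Finset.sum_congr rfl (fun i _ => pow_one (x i))]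
      exact hxS.2
    obtain ⟨u, v, hv, hvule, hvals, ⟨iu, hiu⟩, ⟨iv, hiv⟩⟩ := values_structure x hxS
      (fun i j k hij hik hjk hi hj hk vij vik vjk =>
        no_three_distinct n a b c d e x hxS hmin hmax hij hik hjk hi hj hk vij vik vjk)
    rcases eq_or_lt_of_le hvule with heq | hvu
    · -- a single positive value
      have hvals' : ∀ i, x i = 0 ∨ x i = v := by
        intro i
        rcases hvals i with h | h | h
        · exact Or.inl h
        · exact Or.inr (by rw [h, ← heq])
        · exact Or.inr h
      set r : ℕ := (univ.filter fun i => x i = v).card with hrdef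
      have hr1 : 1 ≤ r := by
        rw [hrdef]
        exact Finset.card_pos.mpr ⟨iv, Finset.mem_filter.mpr ⟨Finset.mem_univ iv, hiv⟩⟩
      have hrn : r ≤ n := by
        rw [hrdef]
        calc (univ.filter fun i => x i = v).card ≤ (univ : Finset (Fin n)).card :=
            Finset.card_le_card (Finset.filter_subset _ _)
          _ = n := by simp
      have hxp : ∀ m : ℕ, 1 ≤ m → powSum n m x = (r:ℝ) * v ^ m := by
        intro m hm
        rw [powSum_one_val x v hvals' hm, hrdef]
      have hfx : quarticF n a b c d e x
          = v^4 * (a*(r:ℝ) + b*(r:ℝ)^2 + c*(r:ℝ)^2 + d*(r:ℝ)^3 + e*(r:ℝ)^4) := by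
        unfold quarticF
        rw [hxp 4 (by norm_num), hxp 3 (by norm_num), hxp 2 (by norm_num),
          hxp 1 (by norm_num)]
        ring
      have hbp : quarticF n a b c d e (blockPt n r 0 1 0)
          = a*(r:ℝ) + b*(r:ℝ)^2 + c*(r:ℝ)^2 + d*(r:ℝ)^3 + e*(r:ℝ)^4 := by
        unfold quarticF
        rw [powSum_blockPt r 0 (by omega) 1 0 (le_refl 1),
          powSum_blockPt r 0 (by omega) 1 0 (by norm_num),
          powSum_blockPt r 0 (by omega) 1 0 (by norm_num),
          powSum_blockPt r 0 (by omega) 1 0 (by norm_num)]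
        norm_num
        ring
      have hval := h1 r hr1 hrn
      rw [hbp] at hval
      rw [hfx]
      positivity
    · -- two distinct positive values
      have huv : u ≠ v := ne_of_gt hvu
      set r : ℕ := (univ.filter fun i => x i = u).card with hrdef
      set s : ℕ := (univ.filter fun i => x i = v).card with hsdef
      have hr : 1 ≤ r := by
        rw [hrdef]
        exact Finset.card_pos.mpr ⟨iu, Finset.mem_filter.mpr ⟨Finset.mem_univ iu, hiu⟩⟩
      have hs : 1 ≤ s := by
        rw [hsdef]
        exact Finset.card_pos.mpr ⟨iv, Finset.mem_filter.mpr ⟨Finset.mem_univ iv, hiv⟩⟩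
      have hrs : r + s ≤ n := by
        rw [hrdef, hsdef]
        exact card_two_val x u v huv
      have hBq := first_order a b c d e x hxS hmin u v hv hvu hvals r s hrdef.symm
        hsdef.symm hr hs
      have hxp : ∀ m : ℕ, 1 ≤ m → powSum n m x = (r:ℝ) * u ^ m + (s:ℝ) * v ^ m := by
        intro m hm
        rw [powSum_two_val x u v huv hvals hm, hrdef, hsdef]
      have hp1 : (r:ℝ)*u + (s:ℝ)*v = 1 := by
        have := hxp 1 (le_refl 1)
        rw [hp1x] at this
        simp only [pow_one] at this
        linarith
      by_cases hcase : r = 1 ∨ s = 1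
      · have hZ : (r, s) ∈ Zf n a b := by
          rcases hcase with h | h
          · left
            exact ⟨s, hs, by omega, Or.inr (by rw [h])⟩
          · left
            exact ⟨r, hr, by omega, Or.inl (by rw [h])⟩
        exact endgame n hn a b c d e h1 h2 x u v hv hvu r s hr hs hrs hxp hp1 hBq hZ
      · push_neg at hcase
        have hr2 : 2 ≤ r := by omega
        have hs2 : 2 ≤ s := by omega
        -- two distinct indices in each block
        obtain ⟨i1, hi1m, i2, hi2m, h12⟩ := Finset.one_lt_card.mp
          (show 1 < (univ.filter fun i => x i = u).card by omega)
        obtain ⟨j1, hj1m, j2, hj2m, hj12⟩ := Finset.one_lt_card.mp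
          (show 1 < (univ.filter fun i => x i = v).card by omega)
        have hx1 : x i1 = u := (Finset.mem_filter.mp hi1m).2
        have hx2 : x i2 = u := (Finset.mem_filter.mp hi2m).2
        have hy1 : x j1 = v := (Finset.mem_filter.mp hj1m).2
        have hy2 : x j2 = v := (Finset.mem_filter.mp hj2m).2
        have hne_uv : ∀ {p q : Fin n}, x p = u → x q = v → p ≠ q := by
          intro p q hp hq hEq
          rw [hEq, hq] at hp
          exact huv hp.symm
        -- E2 : 4a(2u+v)+3b ≥ 0
        have hb1 : 0 ≤ 4*a*(u+u+v) + 3*b := by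
          obtain ⟨z1, z2, z3, hz1, hz2, hz3, hzs, hzq, hzp⟩ := exists_up_uuv u v hv hvu
          have hperm := min_perturb a b c d e x hxS hmin h12 (hne_uv hx1 hy1)
            (hne_uv hx2 hy1) (le_of_lt hz1) (le_of_lt hz2) (le_of_lt hz3)
            (by rw [hx1, hx2, hy1]; exact hzs) (by rw [hx1, hx2, hy1]; exact hzq)
          rw [hx1, hx2, hy1, hp1x] at hperm
          by_contra hc
          push_neg at hc
          have hd : 0 < z1*z2*z3 - u*u*v := by linarith
          nlinarith [hperm, hd]
        -- E3 : 4a(u+2v)+3b ≤ 0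
        have hb2 : 4*a*(v+v+u) + 3*b ≤ 0 := by
          obtain ⟨z1, z2, z3, hz1, hz2, hz3, hzs, hzq, hzp⟩ := exists_down_vvu u v hv hvu
          have hperm := min_perturb a b c d e x hxS hmin hj12 (hne_uv hiu hy1).symm
            (hne_uv hiu hy2).symm (le_of_lt hz1) (le_of_lt hz2) (le_of_lt hz3)
            (by rw [hy1, hy2, hiu]; exact hzs) (by rw [hy1, hy2, hiu]; exact hzq)
          rw [hy1, hy2, hiu, hp1x] at hperm
          by_contra hc
          push_neg at hc
          have hd : z1*z2*z3 - v*v*u < 0 := by linarith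
          nlinarith [hperm, hd]
        have ha0 : 0 ≤ a := by
          by_contra hc
          push_neg at hc
          have h' : a*(u-v) < 0 := mul_neg_of_neg_of_pos hc (by linarith)
          nlinarith [hb1, hb2, h']
        rcases eq_or_lt_of_le ha0 with haz | hapos
        · have hbz : b = 0 := by
            rw [← haz] at hb1 hb2
            have : (0:ℝ) ≤ 3*b := by linarith
            have : 3*b ≤ 0 := by linarith
            linarith
          exact ab_zero_nonneg n hn a b c d e haz.symm hbz h1 h2 x hxS
        · have hbneg : b < 0 := by
            have h' : 0 < a*(v+v+u) := mul_pos hapos (by linarith)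
            nlinarith [hb2, h']
          have hrsn : r + s = n := by
            by_contra hneq
            have hzero : ∃ k0, x k0 = 0 := by
              by_contra hz
              push_neg at hz
              have hsub : (univ : Finset (Fin n)) ⊆
                  (univ.filter fun i => x i = u) ∪ (univ.filter fun i => x i = v) := by
                intro i _
                rcases hvals i with h | h | h
                · exact absurd h (hz i)
                · exact Finset.mem_union_left _
                    (Finset.mem_filter.mpr ⟨Finset.mem_univ i, h⟩)
                · exact Finset.mem_union_right _
                    (Finset.mem_filter.mpr ⟨Finset.mem_univ i, h⟩)
              have hcard := Finset.card_le_card hsub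
              rw [Finset.card_univ, Fintype.card_fin] at hcard
              have := Finset.card_union_le (univ.filter fun i => x i = u)
                (univ.filter fun i => x i = v)
              rw [← hrdef, ← hsdef] at this
              omega
            obtain ⟨k0, hk0⟩ := hzero
            obtain ⟨z1, z2, z3, hz1, hz2, hz3, hzs, hzq, hzp⟩ := exists_up_uv0 u v hv hvu
            have hiuiv : iu ≠ iv := hne_uv hiu hiv
            have hiuk0 : iu ≠ k0 := by
              intro hEq
              rw [hEq, hk0] at hiu
              linarith [hv, hvu, hiu]
            have hivk0 : iv ≠ k0 := by
              intro hEq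
              rw [hEq, hk0] at hiv
              linarith [hv, hiv]
            have hperm := min_perturb a b c d e x hxS hmin hiuiv hiuk0 hivk0
              (le_of_lt hz1) (le_of_lt hz2) (le_of_lt hz3)
              (by rw [hiu, hiv, hk0]; exact hzs) (by rw [hiu, hiv, hk0]; exact hzq)
            rw [hiu, hiv, hk0, hp1x] at hperm
            have hb0 : 0 ≤ 4*a*(u+v+0) + 3*b := by
              by_contra hc
              push_neg at hc
              have hd : 0 < z1*z2*z3 - u*v*0 := by linarith
              nlinarith [hperm, hd]
            have h' : 0 < a*v := mul_pos hapos hv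
            nlinarith [hb0, hb2, h']
          have hZ : (r, s) ∈ Zf n a b := by
            right
            refine ⟨hapos, hbneg, r, hr, by omega, ?_⟩
            have hsn : s = n - r := by omega
            rw [hsn]
          exact endgame n hn a b c d e h1 h2 x u v hv hvu r s hr hs hrs hxp hp1 hBq hZ
end

section
/- For every x ∈ ℝ⁴ with all coordinates nonnegative, 24·p₄(x) − 18·p₃(x)·p₁(x) − 8·p₂(x)² + 9·p₂(x)·p₁(x)² − p₁(x)⁴ ≥ 0, where p_k(x) = x₁^k + x₂^k + x₃^k + x₄^k. -/
open Finset

/-- The sorted (difference-variable) form of the quartic inequality. -/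
theorem quartic_key (a u v w : ℝ) (ha : 0 ≤ a) (hu : 0 ≤ u) (hv : 0 ≤ v) (hw : 0 ≤ w) :
    24*(a^4+(a+u)^4+(a+u+v)^4+(a+u+v+w)^4)
      - 18*(a^3+(a+u)^3+(a+u+v)^3+(a+u+v+w)^3)*(a+(a+u)+(a+u+v)+(a+u+v+w))
      - 8*(a^2+(a+u)^2+(a+u+v)^2+(a+u+v+w)^2)^2
      + 9*(a^2+(a+u)^2+(a+u+v)^2+(a+u+v+w)^2)*(a+(a+u)+(a+u+v)+(a+u+v+w))^2
      - (a+(a+u)+(a+u+v)+(a+u+v+w))^4 ≥ 0 := by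
  have h1 : (0:ℝ) ≤ w^4 := by positivity
  have h2 : (0:ℝ) ≤ v*w^3 := by positivity
  have h3 : (0:ℝ) ≤ v^2*w^2 := by positivity
  have h4 : (0:ℝ) ≤ u*w^3 := by positivity
  have h5 : (0:ℝ) ≤ u*v*w^2 := by positivity
  have h6 : (0:ℝ) ≤ u*v^2*w := by positivity
  have h7 : (0:ℝ) ≤ u*v^3 := by positivity
  have h8 : (0:ℝ) ≤ u^2*w^2 := by positivity
  have h9 : (0:ℝ) ≤ u^2*v*w := by positivity
  have h10 : (0:ℝ) ≤ u^2*v^2 := by positivity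
  have h11 : (0:ℝ) ≤ a*w^3 := by positivity
  have h12 : (0:ℝ) ≤ a*v*w^2 := by positivity
  have h13 : (0:ℝ) ≤ a*v^2*w := by positivity
  have h14 : (0:ℝ) ≤ a*v^3 := by positivity
  have h15 : (0:ℝ) ≤ a*u*w^2 := by positivity
  have h16 : (0:ℝ) ≤ a*u*v*w := by positivity
  have h17 : (0:ℝ) ≤ a*u*v^2 := by positivity
  have h18 : (0:ℝ) ≤ a^2*w^2 := by positivity
  have h19 : (0:ℝ) ≤ a^2*v*w := by positivity
  have h20 : (0:ℝ) ≤ a^2*v^2 := by positivity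
  have h21 : (0:ℝ) ≤ a^2*u*w := by positivity
  have h22 : (0:ℝ) ≤ a^2*u*v := by positivity
  have h23 : (0:ℝ) ≤ a^2*u^2 := by positivity
  nlinarith [h1,h2,h3,h4,h5,h6,h7,h8,h9,h10,h11,h12,h13,h14,h15,h16,h17,h18,h19,h20,h21,h22,h23]

/-- Sorted version with four variables. -/
theorem quartic_key' (a b c d : ℝ) (ha : 0 ≤ a) (hab : a ≤ b) (hbc : b ≤ c) (hcd : c ≤ d) :
    24*(a^4+b^4+c^4+d^4) - 18*(a^3+b^3+c^3+d^3)*(a+b+c+d) - 8*(a^2+b^2+c^2+d^2)^2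
      + 9*(a^2+b^2+c^2+d^2)*(a+b+c+d)^2 - (a+b+c+d)^4 ≥ 0 := by
  have h := quartic_key a (b-a) (c-b) (d-c) ha (by linarith) (by linarith) (by linarith)
  linarith [h]

/-- `24 p₄ − 18 p₃ p₁ − 8 p₂² + 9 p₂ p₁² − p₁⁴ ≥ 0` on the nonnegative orthant of `ℝ⁴`. -/
theorem quartic_example_nonneg_on_orthant (x : Fin 4 → ℝ) (hx : ∀ i, 0 ≤ x i) :
    24 * powSum 4 4 x - 18 * powSum 4 3 x * powSum 4 1 x - 8 * (powSum 4 2 x) ^ 2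
      + 9 * powSum 4 2 x * (powSum 4 1 x) ^ 2 - (powSum 4 1 x) ^ 4 ≥ 0 := by
  set y : Fin 4 → ℝ := x ∘ Tuple.sort x with hy
  have hmono : Monotone y := Tuple.monotone_sort x
  have hps : ∀ k, powSum 4 k x = powSum 4 k y := by
    intro k
    simp only [powSum, hy]
    exact (Equiv.sum_comp (Tuple.sort x) (fun i => x i ^ k)).symm
  rw [hps 4, hps 3, hps 2, hps 1]
  have h0 : 0 ≤ y 0 := hx _
  have h01 : y 0 ≤ y 1 := hmono (by decide)
  have h12 : y 1 ≤ y 2 := hmono (by decide)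
  have h23 : y 2 ≤ y 3 := hmono (by decide)
  have key := quartic_key' (y 0) (y 1) (y 2) (y 3) h0 h01 h12 h23
  simp only [powSum, Fin.sum_univ_four]
  norm_num
  linarith [key]
end

section
/- For an integer n ≥ 2, define f_n : ℝⁿ → ℝ by f_n(x) = 24·p₄(x) − 19·p₃(x)·p₁(x) − 7·p₂(x)² + 9·p₂(x)·p₁(x)² − p₁(x)⁴. Then f_n(x) ≥ 0 for every x ∈ ℝⁿ with all coordinates nonnegative if and only if n ∈ {2, 3}; in particular, for every n ≥ 4 there exists x ∈ ℝⁿ with all coordinates nonnegative and f_n(x) < 0. -/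
open Finset

/-- The symmetric quartic `f_n = 24 P₄ − 19 P₃P₁ − 7 P₂² + 9 P₂P₁² − P₁⁴` on `ℝⁿ`. -/
noncomputable def fEx (n : ℕ) (x : Fin n → ℝ) : ℝ :=
  24 * powSum n 4 x - 19 * powSum n 3 x * powSum n 1 x - 7 * (powSum n 2 x) ^ 2
    + 9 * powSum n 2 x * (powSum n 1 x) ^ 2 - (powSum n 1 x) ^ 4

/-- The counterexample coordinates `(1,1,1,1/4,0,…,0)`. -/
noncomputable def badX (n : ℕ) : Fin n → ℝ :=
  fun i => if (i : ℕ) < 3 then 1 else if (i : ℕ) = 3 then 1/4 else 0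

lemma badX_nonneg (n : ℕ) : ∀ i, 0 ≤ badX n i := by
  intro i
  unfold badX
  split_ifs <;> norm_num

lemma powSum_badX (n : ℕ) (hn : 4 ≤ n) (k : ℕ) (hk : 1 ≤ k) :
    powSum n k (badX n) = 3 + (1/4 : ℝ) ^ k := by
  unfold powSum badX
  rw [Fin.sum_univ_eq_sum_range (fun j => (if j < 3 then (1:ℝ) else if j = 3 then 1/4 else 0) ^ k)]
  rw [← Finset.sum_subset (Finset.range_subset_range.2 hn)
      (f := fun j => (if j < 3 then (1:ℝ) else if j = 3 then 1/4 else 0) ^ k)]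
  · rw [show (4:ℕ) = 3+1 from rfl, Finset.sum_range_succ, Finset.sum_range_succ,
      Finset.sum_range_succ, Finset.sum_range_one]
    norm_num
  · intro j _ hj4
    rw [Finset.mem_range, not_lt] at hj4
    have h1 : ¬ j < 3 := by omega
    have h2 : j ≠ 3 := by omega
    rw [if_neg h1, if_neg h2, zero_pow (by omega)]

lemma counterexample (n : ℕ) (hn : 4 ≤ n) :
    ∃ x : Fin n → ℝ, (∀ i, 0 ≤ x i) ∧ fEx n x < 0 := by
  refine ⟨badX n, badX_nonneg n, ?_⟩
  unfold fEx
  rw [powSum_badX n hn 1 (by norm_num), powSum_badX n hn 2 (by norm_num),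
    powSum_badX n hn 3 (by norm_num), powSum_badX n hn 4 (by norm_num)]
  norm_num

lemma fEx_two_nonneg (x : Fin 2 → ℝ) (hx : ∀ i, 0 ≤ x i) : fEx 2 x ≥ 0 := by
  have h0 := hx 0
  have h1 := hx 1
  unfold fEx powSum
  simp only [Fin.sum_univ_two]
  set a := x 0
  set b := x 1
  nlinarith [sq_nonneg (a - b), mul_nonneg h0 h1, sq_nonneg a, sq_nonneg b,
    mul_nonneg (mul_nonneg h0 h1) (sq_nonneg (a - b)),
    mul_nonneg (sq_nonneg (a - b)) (sq_nonneg (a + b))]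

lemma schurAux (a b c : ℝ) (h0 : 0 ≤ a) (h1 : 0 ≤ b) (hab : a ≤ b) (hbc : b ≤ c) :
    a^2*(a-b)*(a-c) + b^2*(b-a)*(b-c) + c^2*(c-a)*(c-b) ≥ 0 := by
  nlinarith [mul_nonneg (mul_nonneg (sq_nonneg a) (sub_nonneg.2 hab))
      (sub_nonneg.2 (hab.trans hbc)),
    mul_nonneg (mul_nonneg (mul_nonneg (sub_nonneg.2 hbc) (by linarith : (0:ℝ) ≤ c + b))
      (sub_nonneg.2 hbc)) (sub_nonneg.2 (hab.trans hbc)),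
    mul_nonneg (sq_nonneg b) (sq_nonneg (c - b))]

lemma fEx_three_nonneg (x : Fin 3 → ℝ) (hx : ∀ i, 0 ≤ x i) : fEx 3 x ≥ 0 := by
  have h0 := hx 0
  have h1 := hx 1
  have h2 := hx 2
  unfold fEx powSum
  simp only [Fin.sum_univ_three]
  set a := x 0
  set b := x 1
  set c := x 2
  -- f₃ = 6·Schur₂ + Σ ab(a−b)², and Schur₂ ≥ 0 for nonneg reals
  have schur : a^2*(a-b)*(a-c) + b^2*(b-a)*(b-c) + c^2*(c-a)*(c-b) ≥ 0 := by
    rcases le_total a b with hab | hab <;> rcases le_total b c with hbc | hbc <;>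
      rcases le_total a c with hac | hac
    · nlinarith [schurAux a b c h0 h1 hab hbc]
    · nlinarith [schurAux a b c h0 h1 hab hbc]
    · nlinarith [schurAux a c b h0 h2 hac hbc]
    · nlinarith [schurAux c a b h2 h0 hac hab]
    · nlinarith [schurAux b a c h1 h0 hab hac]
    · nlinarith [schurAux b c a h1 h2 hbc hac]
    · nlinarith [schurAux c b a h2 h1 hbc hab]
    · nlinarith [schurAux c b a h2 h1 hbc hab]
  nlinarith [schur, mul_nonneg (mul_nonneg h0 h1) (sq_nonneg (a-b)),
    mul_nonneg (mul_nonneg h1 h2) (sq_nonneg (b-c)),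
    mul_nonneg (mul_nonneg h0 h2) (sq_nonneg (a-c))]

/-- `f_n ≥ 0` on the nonnegative orthant of `ℝⁿ` iff `n ∈ {2,3}`; in particular for
`n ≥ 4` there is a nonnegative point where `f_n` is negative. -/
theorem quartic_example_iff_n_two_three :
    (∀ n : ℕ, 2 ≤ n →
      ((∀ x : Fin n → ℝ, (∀ i, 0 ≤ x i) → fEx n x ≥ 0) ↔ (n = 2 ∨ n = 3))) ∧
    (∀ n : ℕ, 4 ≤ n → ∃ x : Fin n → ℝ, (∀ i, 0 ≤ x i) ∧ fEx n x < 0) := by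
  constructor
  · intro n hn
    constructor
    · intro h
      by_contra hne
      push_neg at hne
      have h4 : 4 ≤ n := by omega
      obtain ⟨x, hx, hneg⟩ := counterexample n h4
      exact absurd (h x hx) (by linarith)
    · rintro (rfl | rfl)
      · exact fEx_two_nonneg
      · exact fEx_three_nonneg
  · exact counterexample
end

section
/- For every integer n ≥ 2 and every x ∈ ℝⁿ with all coordinates nonnegative, 2n·p₄(x) − 2(n+1)·p₃(x)·p₁(x) − n·p₂(x)² + (n+3)·p₂(x)·p₁(x)² − p₁(x)⁴ ≥ 0. -/
open Finset

/-- `2n P₄ − 2(n+1) P₃P₁ − n P₂² + (n+3) P₂P₁² − P₁⁴ ≥ 0` on the nonnegative orthant. -/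
theorem quartic_g_nonneg_on_orthant (n : ℕ) (hn : 2 ≤ n)
    (x : Fin n → ℝ) (hx : ∀ i, 0 ≤ x i) :
    2 * (n : ℝ) * powSum n 4 x - 2 * ((n : ℝ) + 1) * powSum n 3 x * powSum n 1 x
      - (n : ℝ) * (powSum n 2 x) ^ 2 + ((n : ℝ) + 3) * powSum n 2 x * (powSum n 1 x) ^ 2
      - (powSum n 1 x) ^ 4 ≥ 0 := by
  have hP : ∀ k, powSum n k x = ∑ i, x i ^ k := fun k => rfl
  set P1 := powSum n 1 x with hP1
  set P2 := powSum n 2 x with hP2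
  set P3 := powSum n 3 x with hP3
  set P4 := powSum n 4 x with hP4
  -- The key sum
  set S : ℝ := ∑ i, ∑ j, (x i - x j) ^ 2 *
      ((P1 - x i - x j) ^ 2 - (P2 - (x i) ^ 2 - (x j) ^ 2)) with hSdef
  -- S is nonnegative
  have hS0 : 0 ≤ S := by
    apply Finset.sum_nonneg
    intro i _
    apply Finset.sum_nonneg
    intro j _
    rcases eq_or_ne i j with rfl | hij
    · simp
    · apply mul_nonneg (sq_nonneg _)
      have hsub : ({i, j} : Finset (Fin n)) ⊆ univ := subset_univ _
      have h1 : P1 - x i - x j = ∑ k ∈ univ \ {i, j}, x k := by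
        have := Finset.sum_sdiff (f := fun k => x k) hsub
        have hpair : ∑ k ∈ ({i, j} : Finset (Fin n)), x k = x i + x j :=
          Finset.sum_pair hij
        have hP1' : P1 = ∑ k, x k := by
          rw [hP1, hP 1]; simp [pow_one]
        rw [hP1']
        linarith [this, hpair]
      have h2 : P2 - (x i) ^ 2 - (x j) ^ 2 = ∑ k ∈ univ \ {i, j}, (x k) ^ 2 := by
        have := Finset.sum_sdiff (f := fun k => (x k) ^ 2) hsub
        have hpair : ∑ k ∈ ({i, j} : Finset (Fin n)), (x k) ^ 2 = (x i) ^ 2 + (x j) ^ 2 :=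
          Finset.sum_pair hij
        rw [hP2, hP 2]
        linarith [this, hpair]
      rw [h1, h2, sub_nonneg]
      exact Finset.sum_sq_le_sq_sum_of_nonneg (fun k _ => hx k)
  -- Evaluate S
  have hcard : ((Finset.univ : Finset (Fin n)).card : ℝ) = (n : ℝ) := by
    simp
  have inner : ∀ a : ℝ, (∑ j, (a - x j) ^ 2 *
      ((P1 - a - x j) ^ 2 - (P2 - a ^ 2 - (x j) ^ 2)))
      = (n : ℝ) * (-a ^ 2 * P2 + a ^ 2 * P1 ^ 2 - 2 * a ^ 3 * P1 + 2 * a ^ 4)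
        + (2 * a * P2 - 2 * a * P1 ^ 2 + 2 * a ^ 2 * P1 - 2 * a ^ 3) * P1
        + (-P2 + P1 ^ 2 + 2 * a * P1) * P2
        + (-2 * P1 - 2 * a) * P3 + 2 * P4 := by
    intro a
    have step : ∀ j : Fin n, (a - x j) ^ 2 *
        ((P1 - a - x j) ^ 2 - (P2 - a ^ 2 - (x j) ^ 2))
        = (-a ^ 2 * P2 + a ^ 2 * P1 ^ 2 - 2 * a ^ 3 * P1 + 2 * a ^ 4)
          + (2 * a * P2 - 2 * a * P1 ^ 2 + 2 * a ^ 2 * P1 - 2 * a ^ 3) * (x j) ^ 1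
          + (-P2 + P1 ^ 2 + 2 * a * P1) * (x j) ^ 2
          + (-2 * P1 - 2 * a) * (x j) ^ 3 + 2 * (x j) ^ 4 := fun j => by ring
    rw [Finset.sum_congr rfl (fun j _ => step j)]
    simp only [Finset.sum_add_distrib, ← Finset.mul_sum, Finset.sum_const, nsmul_eq_mul,
      Finset.card_univ, Fintype.card_fin]
    rw [← hP 1, ← hP 2, ← hP 3, ← hP 4, ← hP1, ← hP2, ← hP3, ← hP4]
    ring
  have hSval : S = 2 * (2 * (n : ℝ) * P4 - 2 * ((n : ℝ) + 1) * P3 * P1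
      - (n : ℝ) * P2 ^ 2 + ((n : ℝ) + 3) * P2 * P1 ^ 2 - P1 ^ 4) := by
    rw [hSdef]
    rw [Finset.sum_congr rfl (fun i _ => inner (x i))]
    have step2 : ∀ i : Fin n, ((n : ℝ) * (-(x i) ^ 2 * P2 + (x i) ^ 2 * P1 ^ 2
          - 2 * (x i) ^ 3 * P1 + 2 * (x i) ^ 4)
        + (2 * (x i) * P2 - 2 * (x i) * P1 ^ 2 + 2 * (x i) ^ 2 * P1 - 2 * (x i) ^ 3) * P1
        + (-P2 + P1 ^ 2 + 2 * (x i) * P1) * P2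
        + (-2 * P1 - 2 * (x i)) * P3 + 2 * P4)
        = (- P2 ^ 2 + P1 ^ 2 * P2 - 2 * P1 * P3 + 2 * P4)
          + (4 * P1 * P2 - 2 * P1 ^ 3 - 2 * P3 - 2 * P3 * 0) * (x i) ^ 1
          + ((n : ℝ) * (P1 ^ 2 - P2) + 2 * P1 ^ 2) * (x i) ^ 2
          + (-2 * (n : ℝ) * P1 - 2 * P1) * (x i) ^ 3
          + (2 * (n : ℝ)) * (x i) ^ 4 := fun i => by ring
    rw [Finset.sum_congr rfl (fun i _ => step2 i)]
    simp only [Finset.sum_add_distrib, ← Finset.mul_sum, Finset.sum_const, nsmul_eq_mul,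
      Finset.card_univ, Fintype.card_fin]
    rw [← hP 1, ← hP 2, ← hP 3, ← hP 4, ← hP1, ← hP2, ← hP3, ← hP4]
    ring
  linarith
end

section
/- For every integer n ≥ 2 and every x ∈ ℝⁿ with all coordinates nonnegative, −n(n−1)·p₄(x) + 4(n−1)·p₃(x)·p₁(x) + (n² − 3n + 3)·p₂(x)² − 2n·p₂(x)·p₁(x)² + p₁(x)⁴ ≥ 0. -/
open Finset

/-- Expansion of the sum of squared differences over a finset. -/
lemma pair_sq_sum {n : ℕ} (x : Fin n → ℝ) (T : Finset (Fin n)) :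
    ∑ k ∈ T, ∑ l ∈ T, (x k - x l) ^ 2
      = 2 * ((T.card : ℝ) * (∑ k ∈ T, (x k) ^ 2) - (∑ k ∈ T, x k) ^ 2) := by
  have h : ∀ k ∈ T, ∑ l ∈ T, (x k - x l) ^ 2
      = ((T.card : ℝ) * (x k) ^ 2 + ∑ l ∈ T, (x l) ^ 2)
        - (2 * ∑ l ∈ T, x l) * x k := by
    intro k _
    have h2 : ∀ l ∈ T, (x k - x l) ^ 2 = ((x k) ^ 2 + (x l) ^ 2) - (2 * x l) * x k :=
      fun l _ => by ring
    rw [Finset.sum_congr rfl h2, Finset.sum_sub_distrib, Finset.sum_add_distrib,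
      Finset.sum_const, ← Finset.sum_mul, ← Finset.mul_sum, nsmul_eq_mul]
  rw [Finset.sum_congr rfl h, Finset.sum_sub_distrib, Finset.sum_add_distrib,
    Finset.sum_const, ← Finset.mul_sum, ← Finset.mul_sum, nsmul_eq_mul]
  ring

/-- `−n(n−1) P₄ + 4(n−1) P₃P₁ + (n²−3n+3) P₂² − 2n P₂P₁² + P₁⁴ ≥ 0` on the nonnegative
orthant of `ℝⁿ`. -/
theorem quartic_h_nonneg_on_orthant (n : ℕ) (hn : 2 ≤ n)
    (x : Fin n → ℝ) (hx : ∀ i, 0 ≤ x i) :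
    -(n : ℝ) * ((n : ℝ) - 1) * powSum n 4 x
      + 4 * ((n : ℝ) - 1) * powSum n 3 x * powSum n 1 x
      + ((n : ℝ) ^ 2 - 3 * (n : ℝ) + 3) * (powSum n 2 x) ^ 2
      - 2 * (n : ℝ) * powSum n 2 x * (powSum n 1 x) ^ 2
      + (powSum n 1 x) ^ 4 ≥ 0 := by
  set P1 := powSum n 1 x with hP1
  set P2 := powSum n 2 x with hP2
  set P3 := powSum n 3 x with hP3
  set P4 := powSum n 4 x with hP4
  have eP1 : ∑ j, x j ^ 1 = P1 := rfl
  have eP2 : ∑ j, x j ^ 2 = P2 := rfl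
  have eP3 : ∑ j, x j ^ 3 = P3 := rfl
  have eP4 : ∑ j, x j ^ 4 = P4 := rfl
  -- the key identity: the LHS (times 4) equals a sum over distinct quadruples of
  -- (x i - x j)^2 * (x k - x l)^2
  have key : ∀ i j : Fin n,
      (x i - x j) ^ 2 * (∑ k ∈ univ \ {i, j}, ∑ l ∈ univ \ {i, j}, (x k - x l) ^ 2)
      = (x i - x j) ^ 2 *
          (2 * (((n : ℝ) - 2) * (P2 - (x i) ^ 2 - (x j) ^ 2) - (P1 - x i - x j) ^ 2)) := by
    intro i j
    rcases eq_or_ne i j with rfl | hij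
    · simp
    · have hsub : ({i, j} : Finset (Fin n)) ⊆ univ := subset_univ _
      have hcard : (((univ \ {i, j} : Finset (Fin n)).card : ℝ)) = (n : ℝ) - 2 := by
        rw [card_sdiff_of_subset hsub, card_univ, Fintype.card_fin, card_pair hij, Nat.cast_sub hn]
        norm_num
      have hs1 : ∑ k ∈ univ \ {i, j}, x k = P1 - x i - x j := by
        rw [Finset.sum_sdiff_eq_sub hsub, Finset.sum_pair hij, ← eP1]
        simp [pow_one]
        ring
      have hs2 : ∑ k ∈ univ \ {i, j}, (x k) ^ 2 = P2 - (x i) ^ 2 - (x j) ^ 2 := by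
        rw [Finset.sum_sdiff_eq_sub hsub, Finset.sum_pair hij, eP2]
        ring
      rw [pair_sq_sum, hcard, hs1, hs2]
  have inner : ∀ i : Fin n,
      ∑ j, (x i - x j) ^ 2 *
          (2 * (((n : ℝ) - 2) * (P2 - (x i) ^ 2 - (x j) ^ 2) - (P1 - x i - x j) ^ 2))
      = (2 * P4 - 2 * P4 * n - 4 * P2 ^ 2 + 2 * P2 ^ 2 * n + 4 * P1 * P3 - 2 * P1 ^ 2 * P2)
        + (-8 * P3 + 4 * P3 * n + 4 * P1 * P2 - 4 * P1 * P2 * n + 4 * P1 ^ 3) * x i ^ 1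
        + (12 * P2 - 8 * P2 * n + 2 * P2 * n ^ 2 - 4 * P1 ^ 2 - 2 * P1 ^ 2 * n) * x i ^ 2
        + (-8 * P1 + 8 * P1 * n) * x i ^ 3
        + (2 * n - 2 * n ^ 2) * x i ^ 4 := by
    intro i
    have expand : ∀ j : Fin n,
        (x i - x j) ^ 2 *
          (2 * (((n : ℝ) - 2) * (P2 - (x i) ^ 2 - (x j) ^ 2) - (P1 - x i - x j) ^ 2))
        = ((-4) * (x i) ^ 2 * P2 + 2 * (x i) ^ 2 * P2 * n + (-2) * (x i) ^ 2 * P1 ^ 2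
            + 4 * (x i) ^ 3 * P1 + 2 * (x i) ^ 4 + (-2) * (x i) ^ 4 * n)
          + (8 * (x i) * P2 + (-4) * (x i) * P2 * n + 4 * (x i) * P1 ^ 2
            + (-4) * (x i) ^ 2 * P1 + (-8) * (x i) ^ 3 + 4 * (x i) ^ 3 * n) * x j ^ 1
          + ((-4) * P2 + 2 * P2 * n + (-2) * P1 ^ 2 + (-4) * (x i) * P1
            + 12 * (x i) ^ 2 + (-4) * (x i) ^ 2 * n) * x j ^ 2
          + (4 * P1 + (-8) * (x i) + 4 * (x i) * n) * x j ^ 3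
          + (2 + (-2) * n) * x j ^ 4 := fun j => by ring
    rw [Finset.sum_congr rfl (fun j _ => expand j), Finset.sum_add_distrib,
      Finset.sum_add_distrib, Finset.sum_add_distrib, Finset.sum_add_distrib,
      ← Finset.mul_sum, ← Finset.mul_sum, ← Finset.mul_sum, ← Finset.mul_sum,
      Finset.sum_const, card_univ, Fintype.card_fin, nsmul_eq_mul, eP1, eP2, eP3, eP4]
    ring
  have total : ∑ i, ∑ j, (x i - x j) ^ 2 *
      (∑ k ∈ univ \ {i, j}, ∑ l ∈ univ \ {i, j}, (x k - x l) ^ 2)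
      = 4 * (-(n : ℝ) * ((n : ℝ) - 1) * P4
        + 4 * ((n : ℝ) - 1) * P3 * P1
        + ((n : ℝ) ^ 2 - 3 * (n : ℝ) + 3) * P2 ^ 2
        - 2 * (n : ℝ) * P2 * P1 ^ 2 + P1 ^ 4) := by
    calc ∑ i, ∑ j, (x i - x j) ^ 2 *
          (∑ k ∈ univ \ {i, j}, ∑ l ∈ univ \ {i, j}, (x k - x l) ^ 2)
        = ∑ i, ∑ j, (x i - x j) ^ 2 *
          (2 * (((n : ℝ) - 2) * (P2 - (x i) ^ 2 - (x j) ^ 2) - (P1 - x i - x j) ^ 2)) :=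
          Finset.sum_congr rfl fun i _ => Finset.sum_congr rfl fun j _ => key i j
      _ = ∑ i, ((2 * P4 - 2 * P4 * n - 4 * P2 ^ 2 + 2 * P2 ^ 2 * n + 4 * P1 * P3
              - 2 * P1 ^ 2 * P2)
          + (-8 * P3 + 4 * P3 * n + 4 * P1 * P2 - 4 * P1 * P2 * n + 4 * P1 ^ 3) * x i ^ 1
          + (12 * P2 - 8 * P2 * n + 2 * P2 * n ^ 2 - 4 * P1 ^ 2 - 2 * P1 ^ 2 * n) * x i ^ 2
          + (-8 * P1 + 8 * P1 * n) * x i ^ 3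
          + (2 * n - 2 * n ^ 2) * x i ^ 4) := Finset.sum_congr rfl fun i _ => inner i
      _ = _ := by
          rw [Finset.sum_add_distrib, Finset.sum_add_distrib, Finset.sum_add_distrib,
            Finset.sum_add_distrib, ← Finset.mul_sum, ← Finset.mul_sum, ← Finset.mul_sum,
            ← Finset.mul_sum, Finset.sum_const, card_univ, Fintype.card_fin, nsmul_eq_mul,
            eP1, eP2, eP3, eP4]
          ring
  have nonneg : (0 : ℝ) ≤ ∑ i, ∑ j, (x i - x j) ^ 2 *
      (∑ k ∈ univ \ {i, j}, ∑ l ∈ univ \ {i, j}, (x k - x l) ^ 2) :=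
    Finset.sum_nonneg fun i _ => Finset.sum_nonneg fun j _ =>
      mul_nonneg (sq_nonneg _)
        (Finset.sum_nonneg fun k _ => Finset.sum_nonneg fun l _ => sq_nonneg _)
  linarith [total, nonneg]
end

section
/- Let m ≥ 1 be an integer and let u ∈ ℝ^m. Then all coordinates of u are nonnegative if and only if e_k(u) ≥ 0 for every k ∈ {1, 2, …, m}, where e_k denotes the k-th elementary symmetric polynomial in m variables. -/
open Finset

/-- The `k`-th elementary symmetric polynomial evaluated at `u ∈ ℝ^m`. -/
noncomputable def esym (m k : ℕ) (u : Fin m → ℝ) : ℝ :=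
  ∑ S ∈ Finset.univ.powersetCard k, ∏ i ∈ S, u i

/-- All coordinates of `u ∈ ℝ^m` are nonnegative iff all elementary symmetric
functions `e₁(u), …, e_m(u)` are nonnegative. -/
theorem nonneg_iff_esymm_nonneg (m : ℕ) (hm : 1 ≤ m) (u : Fin m → ℝ) :
    (∀ i, 0 ≤ u i) ↔ (∀ k : ℕ, 1 ≤ k → k ≤ m → 0 ≤ esym m k u) := by
  constructor
  · intro h k _ _
    exact Finset.sum_nonneg fun S _ => Finset.prod_nonneg fun i _ => h i
  · intro h j
    by_contra hj
    push_neg at hj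
    set x : ℝ := -u j with hx
    have hxpos : 0 < x := by simp only [hx]; linarith
    have key : ∏ i, (u i + x) = ∑ k ∈ Finset.range (m+1), esym m k u * x^(m-k) := by
      rw [Finset.prod_add, Finset.sum_powerset]
      simp only [Finset.card_univ, Fintype.card_fin]
      refine Finset.sum_congr rfl fun k hk => ?_
      rw [esym, Finset.sum_mul]
      refine Finset.sum_congr rfl fun t ht => ?_
      rw [Finset.mem_powersetCard] at ht
      rw [Finset.prod_const, Finset.card_sdiff_of_subset (Finset.subset_univ t),
        Finset.card_univ, Fintype.card_fin, ht.2]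
    have h0 : ∏ i, (u i + x) = 0 :=
      Finset.prod_eq_zero (Finset.mem_univ j) (by simp [hx])
    have e0 : esym m 0 u = 1 := by simp [esym]
    have hpos : 0 < ∑ k ∈ Finset.range (m+1), esym m k u * x^(m-k) := by
      rw [Finset.sum_range_succ']
      have h1 : 0 ≤ ∑ k ∈ Finset.range m, esym m (k+1) u * x^(m-(k+1)) := by
        refine Finset.sum_nonneg fun k hk => ?_
        rw [Finset.mem_range] at hk
        exact mul_nonneg (h (k+1) (Nat.succ_le_succ (Nat.zero_le k)) hk)
          (pow_nonneg hxpos.le _)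
      have h2 : 0 < esym m 0 u * x^(m-0) := by
        rw [e0, one_mul]
        exact pow_pos hxpos _
      linarith
    rw [key] at h0
    linarith
end

section
/- Let A, B, C, D, E be real numbers with A ≠ 0, extend F(z) = Az⁴ + Bz³ + Cz² + Dz + E to ℂ, and let z₁, z₂, z₃ ∈ ℂ be such that 4A·X³ + 3B·X² + 2C·X + D = 4A·(X − z₁)(X − z₂)(X − z₃) as polynomials over ℂ. Then: 256A³·(F(z₁) + F(z₂) + F(z₃)) = 768A³E − 64A²(3BD + 2C²) + 144AB²C − 27B⁴; 128A³·(F(z₁)F(z₂) + F(z₁)F(z₃) + F(z₂)F(z₃)) = 384A³E² − 8A²(24BDE + 16C²E − 9CD²) + A(144B²CE − 3B²D² − 40BC²D + 8C⁴) − B²(27B²E − 9BCD + 2C³); and 256A³·F(z₁)F(z₂)F(z₃) = 256A³E³ − 192A²BDE² − 128A²C²E² + 144A²CD²E − 27A²D⁴ + 144AB²CE² − 6AB²D²E − 80ABC²DE + 18ABCD³ + 16AC⁴E − 4AC³D² − 27B⁴E² + 18B³CDE − 4B³D³ − 4B²C³E + B²C²D². -/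
/-- Symmetric functions of the values of a quartic `F` (with real coefficients,
`A ≠ 0`) at the three complex roots of its derivative `F'`. -/
theorem quartic_GHK_formulas (A B C D E : ℝ) (hA : A ≠ 0) (z₁ z₂ z₃ : ℂ)
    (hroots : ∀ X : ℂ, 4 * (A : ℂ) * X ^ 3 + 3 * (B : ℂ) * X ^ 2 + 2 * (C : ℂ) * X + (D : ℂ)
      = 4 * (A : ℂ) * (X - z₁) * (X - z₂) * (X - z₃))
    (F : ℂ → ℂ)
    (hF : ∀ z : ℂ, F z = (A : ℂ) * z ^ 4 + (B : ℂ) * z ^ 3 + (C : ℂ) * z ^ 2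
      + (D : ℂ) * z + (E : ℂ)) :
    256 * (A : ℂ) ^ 3 * (F z₁ + F z₂ + F z₃)
      = ((768 * A ^ 3 * E - 64 * A ^ 2 * (3 * B * D + 2 * C ^ 2)
          + 144 * A * B ^ 2 * C - 27 * B ^ 4 : ℝ) : ℂ) ∧
    128 * (A : ℂ) ^ 3 * (F z₁ * F z₂ + F z₁ * F z₃ + F z₂ * F z₃)
      = ((384 * A ^ 3 * E ^ 2
          - 8 * A ^ 2 * (24 * B * D * E + 16 * C ^ 2 * E - 9 * C * D ^ 2)
          + A * (144 * B ^ 2 * C * E - 3 * B ^ 2 * D ^ 2 - 40 * B * C ^ 2 * D + 8 * C ^ 4)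
          - B ^ 2 * (27 * B ^ 2 * E - 9 * B * C * D + 2 * C ^ 3) : ℝ) : ℂ) ∧
    256 * (A : ℂ) ^ 3 * (F z₁ * F z₂ * F z₃)
      = ((256 * A ^ 3 * E ^ 3 - 192 * A ^ 2 * B * D * E ^ 2
          - 128 * A ^ 2 * C ^ 2 * E ^ 2 + 144 * A ^ 2 * C * D ^ 2 * E - 27 * A ^ 2 * D ^ 4
          + 144 * A * B ^ 2 * C * E ^ 2 - 6 * A * B ^ 2 * D ^ 2 * E
          - 80 * A * B * C ^ 2 * D * E + 18 * A * B * C * D ^ 3 + 16 * A * C ^ 4 * E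
          - 4 * A * C ^ 3 * D ^ 2 - 27 * B ^ 4 * E ^ 2 + 18 * B ^ 3 * C * D * E
          - 4 * B ^ 3 * D ^ 3 - 4 * B ^ 2 * C ^ 3 * E + B ^ 2 * C ^ 2 * D ^ 2 : ℝ) : ℂ) := by
  have hB : (B : ℂ) = -(4 * (A : ℂ) * (z₁ + z₂ + z₃)) / 3 := by
    have h1 := hroots 1
    have hm := hroots (-1)
    have h0 := hroots 0
    field_simp
    linear_combination h1 / 2 + hm / 2 - h0
  have hC : (C : ℂ) = 2 * (A : ℂ) * (z₁ * z₂ + z₁ * z₃ + z₂ * z₃) := by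
    have h1 := hroots 1
    have hm := hroots (-1)
    linear_combination h1 / 4 - hm / 4
  have hD : (D : ℂ) = -(4 * (A : ℂ) * (z₁ * z₂ * z₃)) := by
    linear_combination hroots 0
  refine ⟨?_, ?_, ?_⟩ <;>
  · push_cast
    rw [hF z₁, hF z₂, hF z₃, hB, hC, hD]
    ring
end

section
/- For every integer n ≥ 2 and every x ∈ ℝⁿ, −2(n−1)·p₃(x)·p₁(x) + (n−2)·p₂(x)² + (n+1)·p₂(x)·p₁(x)² − p₁(x)⁴ ≥ 0. -/
open Finset

/-- Newton's inequality: `−2(n−1) P₃P₁ + (n−2) P₂² + (n+1) P₂P₁² − P₁⁴ ≥ 0` on `ℝⁿ`. -/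
theorem newton_quartic_nonneg (n : ℕ) (hn : 2 ≤ n) (x : Fin n → ℝ) :
    -2 * ((n : ℝ) - 1) * powSum n 3 x * powSum n 1 x
      + ((n : ℝ) - 2) * (powSum n 2 x) ^ 2
      + ((n : ℝ) + 1) * powSum n 2 x * (powSum n 1 x) ^ 2
      - (powSum n 1 x) ^ 4 ≥ 0 := by
  set P1 := powSum n 1 x with hP1
  set P2 := powSum n 2 x with hP2
  set P3 := powSum n 3 x with hP3
  have hP4 : (0:ℝ) ≤ 0 := le_refl 0
  set P4 : ℝ := ∑ i, x i ^ 4 with hP4def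
  set q : Fin n → ℝ := fun i => x i * P1 - x i ^ 2 with hq
  -- sum of q
  have hSq : ∑ i, q i = P1 ^ 2 - P2 := by
    simp only [hq, Finset.sum_sub_distrib, ← Finset.sum_mul, hP1, hP2, powSum]
    simp [pow_one]
    ring
  -- sum of q squared
  have hSq2 : ∑ i, (q i) ^ 2 = P2 * P1 ^ 2 - 2 * P1 * P3 + P4 := by
    have h1 : ∀ i, (q i) ^ 2 = P1 ^ 2 * x i ^ 2 - 2 * P1 * x i ^ 3 + x i ^ 4 := by
      intro i; simp only [hq]; ring
    rw [Finset.sum_congr rfl fun i _ => h1 i]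
    rw [Finset.sum_add_distrib, Finset.sum_sub_distrib, ← Finset.mul_sum, ← Finset.mul_sum]
    simp only [hP2, hP3, powSum, hP4def]
    ring
  -- q i as a sum over erase i
  have hqi : ∀ i, q i = ∑ j ∈ Finset.univ.erase i, x i * x j := by
    intro i
    rw [← Finset.mul_sum, Finset.sum_erase_eq_sub (Finset.mem_univ i)]
    simp only [hq, hP1, powSum, pow_one]
    ring
  -- inner square sums
  have hinner : ∀ i : Fin n, ∑ j ∈ Finset.univ.erase i, (x i * x j) ^ 2
      = x i ^ 2 * (P2 - x i ^ 2) := by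
    intro i
    simp only [mul_pow, ← Finset.mul_sum]
    rw [Finset.sum_erase_eq_sub (Finset.mem_univ i)]
    simp [hP2, powSum]
  have hcard : (Finset.univ : Finset (Fin n)).card = n := by simp
  -- Cauchy-Schwarz 1 : (∑ q)² ≤ n * ∑ q²
  have hCS1 : (∑ i, q i) ^ 2 ≤ (n : ℝ) * ∑ i, (q i) ^ 2 := by
    have := sq_sum_le_card_mul_sum_sq (s := (Finset.univ : Finset (Fin n))) (f := q)
    simpa [hcard] using this
  -- Cauchy-Schwarz 2, per index, then summed
  have hCS2 : ∑ i, (q i) ^ 2 ≤ ((n : ℝ) - 1) * (P2 ^ 2 - P4) := by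
    have hstep : ∀ i : Fin n, (q i) ^ 2 ≤ ((n : ℝ) - 1) * (x i ^ 2 * (P2 - x i ^ 2)) := by
      intro i
      have := sq_sum_le_card_mul_sum_sq (s := Finset.univ.erase i)
        (f := fun j => x i * x j)
      rw [← hqi i] at this
      have hc : ((Finset.univ.erase i).card : ℝ) = (n : ℝ) - 1 := by
        rw [Finset.card_erase_of_mem (Finset.mem_univ i), hcard]
        have : 1 ≤ n := le_trans (by norm_num) hn
        push_cast [Nat.cast_sub this]
        ring
      rw [hinner i] at this
      rw [hc] at this
      exact this
    calc ∑ i, (q i) ^ 2 ≤ ∑ i, ((n : ℝ) - 1) * (x i ^ 2 * (P2 - x i ^ 2)) :=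
          Finset.sum_le_sum fun i _ => hstep i
      _ = ((n : ℝ) - 1) * (P2 ^ 2 - P4) := by
          rw [← Finset.mul_sum]
          congr 1
          have : ∀ i : Fin n, x i ^ 2 * (P2 - x i ^ 2) = x i ^ 2 * P2 - x i ^ 4 := by
            intro i; ring
          rw [Finset.sum_congr rfl fun i _ => this i, Finset.sum_sub_distrib,
            ← Finset.sum_mul]
          simp only [hP2, powSum, hP4def]
          ring
  -- combine
  rw [hSq] at hCS1
  rw [hSq2] at hCS1 hCS2
  nlinarith [hCS1, hCS2]
end

section
/- For every integer n ≥ 2 and every x ∈ ℝⁿ, −n(n−1)·p₄(x) + 4(n−1)·p₃(x)·p₁(x) + (n² − 3n + 3)·p₂(x)² − 2n·p₂(x)·p₁(x)² + p₁(x)⁴ ≥ 0. -/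
open Finset

lemma sum_poly4 (n : ℕ) (z : Fin n → ℝ) (c0 c1 c2 c3 c4 : ℝ) :
    ∑ i, (c0 + c1 * z i + c2 * z i ^ 2 + c3 * z i ^ 3 + c4 * z i ^ 4)
      = n * c0 + c1 * (∑ i, z i) + c2 * (∑ i, z i ^ 2) + c3 * (∑ i, z i ^ 3)
        + c4 * (∑ i, z i ^ 4) := by
  simp [Finset.sum_add_distrib, ← Finset.mul_sum, Finset.sum_const, Finset.card_univ,
    nsmul_eq_mul]

lemma double_sum_sq (n : ℕ) (z : Fin n → ℝ) (a b c : ℝ) :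
    ∑ i, ∑ j, (a * z i ^ 2 + a * z j ^ 2 + b * (z i * z j) + c) ^ 2
      = 2 * n * a ^ 2 * (∑ i, z i ^ 4) + (b ^ 2 + 2 * a ^ 2) * (∑ i, z i ^ 2) ^ 2
        + n ^ 2 * c ^ 2 + 4 * a * b * ((∑ i, z i ^ 3) * (∑ i, z i))
        + 4 * a * c * n * (∑ i, z i ^ 2) + 2 * b * c * (∑ i, z i) ^ 2 := by
  set r1 := ∑ i, z i with hr1
  set r2 := ∑ i, z i ^ 2 with hr2
  set r3 := ∑ i, z i ^ 3 with hr3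
  set r4 := ∑ i, z i ^ 4 with hr4
  have inner : ∀ i, ∑ j, (a * z i ^ 2 + a * z j ^ 2 + b * (z i * z j) + c) ^ 2
      = n * (a * z i ^ 2 + c) ^ 2 + (2 * b * (a * z i ^ 2 + c) * z i) * r1
        + (b ^ 2 * z i ^ 2 + 2 * a * (a * z i ^ 2 + c)) * r2
        + (2 * a * b * z i) * r3 + a ^ 2 * r4 := by
    intro i
    have h1 : ∑ j, (a * z i ^ 2 + a * z j ^ 2 + b * (z i * z j) + c) ^ 2
        = ∑ j, ((a * z i ^ 2 + c) ^ 2 + (2 * b * (a * z i ^ 2 + c) * z i) * z j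
            + (b ^ 2 * z i ^ 2 + 2 * a * (a * z i ^ 2 + c)) * z j ^ 2
            + (2 * a * b * z i) * z j ^ 3 + a ^ 2 * z j ^ 4) :=
      Finset.sum_congr rfl fun j _ => by ring
    rw [h1, sum_poly4]
  calc ∑ i, ∑ j, (a * z i ^ 2 + a * z j ^ 2 + b * (z i * z j) + c) ^ 2
      = ∑ i, ((n * c ^ 2 + 2 * a * c * r2 + a ^ 2 * r4)
          + (2 * b * c * r1 + 2 * a * b * r3) * z i
          + (2 * n * a * c + b ^ 2 * r2 + 2 * a ^ 2 * r2) * z i ^ 2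
          + (2 * a * b * r1) * z i ^ 3 + (n * a ^ 2) * z i ^ 4) := by
        refine Finset.sum_congr rfl fun i _ => ?_
        rw [inner i]; ring
    _ = n * (n * c ^ 2 + 2 * a * c * r2 + a ^ 2 * r4)
          + (2 * b * c * r1 + 2 * a * b * r3) * r1
          + (2 * n * a * c + b ^ 2 * r2 + 2 * a ^ 2 * r2) * r2
          + (2 * a * b * r1) * r3 + (n * a ^ 2) * r4 := by
        rw [sum_poly4]
    _ = _ := by ring

/-- `−n(n−1) P₄ + 4(n−1) P₃P₁ + (n²−3n+3) P₂² − 2n P₂P₁² + P₁⁴ ≥ 0` on all of `ℝⁿ`. -/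
theorem quartic_h_nonneg (n : ℕ) (hn : 2 ≤ n) (x : Fin n → ℝ) :
    -(n : ℝ) * ((n : ℝ) - 1) * powSum n 4 x
      + 4 * ((n : ℝ) - 1) * powSum n 3 x * powSum n 1 x
      + ((n : ℝ) ^ 2 - 3 * (n : ℝ) + 3) * (powSum n 2 x) ^ 2
      - 2 * (n : ℝ) * powSum n 2 x * (powSum n 1 x) ^ 2
      + (powSum n 1 x) ^ 4 ≥ 0 := by
  obtain rfl | h3 : n = 2 ∨ 3 ≤ n := by omega
  · have h0 : -(2 : ℝ) * ((2 : ℝ) - 1) * powSum 2 4 x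
        + 4 * ((2 : ℝ) - 1) * powSum 2 3 x * powSum 2 1 x
        + ((2 : ℝ) ^ 2 - 3 * (2 : ℝ) + 3) * (powSum 2 2 x) ^ 2
        - 2 * (2 : ℝ) * powSum 2 2 x * (powSum 2 1 x) ^ 2
        + (powSum 2 1 x) ^ 4 = 0 := by
      simp only [powSum, Fin.sum_univ_two]
      ring
    norm_num at h0 ⊢
    rw [h0]
  · set p1 := powSum n 1 x with hp1
    set p2 := powSum n 2 x with hp2
    set p3 := powSum n 3 x with hp3
    set p4 := powSum n 4 x with hp4
    set z : Fin n → ℝ := fun i => n * x i - p1 with hz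
    have e1 : ∑ i, z i = n * p1 + (n : ℝ) * p1 * (-1) := by
      have : ∑ i, z i = ∑ i, ((-p1) + (n : ℝ) * x i + 0 * x i ^ 2 + 0 * x i ^ 3 + 0 * x i ^ 4) :=
        Finset.sum_congr rfl fun i _ => by simp [hz]; ring
      rw [this, sum_poly4]
      simp only [powSum, pow_one] at hp1
      rw [← hp1]; ring
    have e2 : ∑ i, z i ^ 2 = n * p1 ^ 2 - 2 * n * p1 * p1 + n ^ 2 * p2 := by
      have : ∑ i, z i ^ 2
          = ∑ i, (p1 ^ 2 + (-(2 * n * p1)) * x i + (n : ℝ) ^ 2 * x i ^ 2 + 0 * x i ^ 3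
              + 0 * x i ^ 4) :=
        Finset.sum_congr rfl fun i _ => by simp [hz]; ring
      rw [this, sum_poly4]
      simp only [powSum, pow_one] at hp1 hp2
      rw [← hp1, ← hp2]; ring
    have e3 : ∑ i, z i ^ 3 = -(n * p1 ^ 3) + 3 * n * p1 ^ 2 * p1 - 3 * n ^ 2 * p1 * p2
        + n ^ 3 * p3 := by
      have : ∑ i, z i ^ 3
          = ∑ i, ((-(p1 ^ 3)) + (3 * (n : ℝ) * p1 ^ 2) * x i
              + (-(3 * (n : ℝ) ^ 2 * p1)) * x i ^ 2 + (n : ℝ) ^ 3 * x i ^ 3 + 0 * x i ^ 4) :=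
        Finset.sum_congr rfl fun i _ => by simp [hz]; ring
      rw [this, sum_poly4]
      simp only [powSum, pow_one] at hp1 hp2 hp3
      rw [← hp1, ← hp2, ← hp3]; ring
    have e4 : ∑ i, z i ^ 4 = n * p1 ^ 4 - 4 * n * p1 ^ 3 * p1 + 6 * n ^ 2 * p1 ^ 2 * p2
        - 4 * n ^ 3 * p1 * p3 + n ^ 4 * p4 := by
      have : ∑ i, z i ^ 4
          = ∑ i, (p1 ^ 4 + (-(4 * (n : ℝ) * p1 ^ 3)) * x i
              + (6 * (n : ℝ) ^ 2 * p1 ^ 2) * x i ^ 2 + (-(4 * (n : ℝ) ^ 3 * p1)) * x i ^ 3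
              + (n : ℝ) ^ 4 * x i ^ 4) :=
        Finset.sum_congr rfl fun i _ => by simp [hz]; ring
      rw [this, sum_poly4]
      simp only [powSum, pow_one] at hp1 hp2 hp3 hp4
      rw [← hp1, ← hp2, ← hp3, ← hp4]; ring
    set a : ℝ := (n : ℝ) - 1 with ha
    set b : ℝ := ((n : ℝ) - 1) * ((n : ℝ) - 2) with hb
    set c : ℝ := -(∑ i, z i ^ 2) with hc
    have hdiag : ∑ i, (a * z i ^ 2 + a * z i ^ 2 + b * (z i * z i) + c) ^ 2
        = n * c ^ 2 + (2 * (2 * a + b) * c) * (∑ i, z i ^ 2)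
          + (2 * a + b) ^ 2 * (∑ i, z i ^ 4) := by
      have : ∑ i, (a * z i ^ 2 + a * z i ^ 2 + b * (z i * z i) + c) ^ 2
          = ∑ i, (c ^ 2 + 0 * z i + (2 * (2 * a + b) * c) * z i ^ 2 + 0 * z i ^ 3
              + (2 * a + b) ^ 2 * z i ^ 4) :=
        Finset.sum_congr rfl fun i _ => by ring
      rw [this, sum_poly4]; ring
    have hle : ∑ i, (a * z i ^ 2 + a * z i ^ 2 + b * (z i * z i) + c) ^ 2
        ≤ ∑ i, ∑ j, (a * z i ^ 2 + a * z j ^ 2 + b * (z i * z j) + c) ^ 2 := by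
      refine Finset.sum_le_sum fun i _ => ?_
      exact Finset.single_le_sum (f := fun j => (a * z i ^ 2 + a * z j ^ 2 + b * (z i * z j) + c) ^ 2)
        (fun j _ => sq_nonneg _) (Finset.mem_univ i)
    have hkey := double_sum_sq n z a b c
    set E : ℝ := -(n : ℝ) * ((n : ℝ) - 1) * p4 + 4 * ((n : ℝ) - 1) * p3 * p1
        + ((n : ℝ) ^ 2 - 3 * (n : ℝ) + 3) * p2 ^ 2 - 2 * (n : ℝ) * p2 * p1 ^ 2 + p1 ^ 4 with hE
    have hmain : (n : ℝ) ^ 4 * ((n : ℝ) - 1) * ((n : ℝ) - 2) * E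
        = (∑ i, ∑ j, (a * z i ^ 2 + a * z j ^ 2 + b * (z i * z j) + c) ^ 2)
          - ∑ i, (a * z i ^ 2 + a * z i ^ 2 + b * (z i * z i) + c) ^ 2 := by
      rw [hkey, hdiag, hc, e1, e2, e3, e4, hE, ha, hb]
      ring
    have hpos : (0 : ℝ) < (n : ℝ) ^ 4 * ((n : ℝ) - 1) * ((n : ℝ) - 2) := by
      have h3' : (3 : ℝ) ≤ (n : ℝ) := by exact_mod_cast h3
      have h0 : (0 : ℝ) < (n : ℝ) ^ 4 := by positivity
      have h1 : (0 : ℝ) < (n : ℝ) - 1 := by linarith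
      have h2 : (0 : ℝ) < (n : ℝ) - 2 := by linarith
      exact mul_pos (mul_pos h0 h1) h2
    by_contra hcon
    push_neg at hcon
    have : (n : ℝ) ^ 4 * ((n : ℝ) - 1) * ((n : ℝ) - 2) * E < 0 :=
      mul_neg_of_pos_of_neg hpos (by linarith)
    linarith [this, hmain ▸ (sub_nonneg.mpr hle)]
end
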